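/- arXiv:2511.17436 — 5 statements merged into one kernel-verified Lean document; each statement's English description precedes it below -/
import Mathlib

section
/- Let n,m,κ ∈ ℕ, let A ∈ ℝ^{n×n} be invertible with induced 2-norm ‖A‖ ≤ 1, let B ∈ ℝ^{n×m}, and suppose the κ-step reachability matrix R := [B, AB, …, A^{κ−1}B] ∈ ℝ^{n×κm} has rank n. Let ū > 0. Then there exist m₀ > 0 and C > 0 such that for every x ∈ ℝⁿ and every pair ϑ = (ϑ₁,ϑ₂) with ϑ₁ ∈ ℝ^{n×n}, ϑ₂ ∈ ℝ^{n×κm} and ‖(ϑ₁,ϑ₂) − (A^κ, R)‖ ≤ m₀ (so that ϑ₂ϑ₂ᵀ is invertible), one has ‖sat_ū(ϑ₂†ϑ₁ x) − sat_ū(R†A^κ x)‖ ≤ C·‖(ϑ₁,ϑ₂) − (A^κ, R)‖, where for a full-row-rank matrix M the right pseudoinverse is M† := Mᵀ(MMᵀ)⁻¹. -/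
noncomputable section

/-- Induced 2-norm of a real matrix. -/
noncomputable def opNorm2 {m n : Type*} [Fintype m] [Fintype n] [DecidableEq n]
    (A : Matrix m n ℝ) : ℝ :=
  ‖LinearMap.toContinuousLinearMap (Matrix.toEuclideanLin A)‖

/-- Radial saturation function on a Euclidean space. -/
noncomputable def satV {ι : Type*} [Fintype ι] (r : ℝ) (v : EuclideanSpace ℝ ι) :
    EuclideanSpace ℝ ι :=
  if ‖v‖ ≤ r then v else (r / ‖v‖) • v

/-- Right pseudoinverse `M† = Mᵀ(MMᵀ)⁻¹` of a full-row-rank matrix. -/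
noncomputable def rightPseudoInv {n : ℕ} {c : Type*} [Fintype c] [DecidableEq c]
    (M : Matrix (Fin n) c ℝ) : Matrix c (Fin n) ℝ :=
  M.transpose * (M * M.transpose)⁻¹

open scoped Matrix.Norms.L2Operator
open Matrix

set_option linter.unusedSectionVars false
set_option maxHeartbeats 2000000

section Aux

lemma opNorm2_eq {m n : Type*} [Fintype m] [Fintype n] [DecidableEq n]
    (A : Matrix m n ℝ) : opNorm2 A = ‖A‖ := rfl

lemma norm_toEuclideanLin_apply_le {m n : Type*} [Fintype m] [Fintype n] [DecidableEq n]
    (D : Matrix m n ℝ) (x : EuclideanSpace ℝ n) :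
    ‖Matrix.toEuclideanLin D x‖ ≤ ‖D‖ * ‖x‖ :=
  D.l2_opNorm_mulVec x

lemma toEuclideanLin_mul_apply {a b c : Type*} [Fintype a] [Fintype b] [Fintype c]
    [DecidableEq b] [DecidableEq c]
    (P : Matrix a b ℝ) (Q : Matrix b c ℝ) (z : EuclideanSpace ℝ c) :
    Matrix.toEuclideanLin (P * Q) z = Matrix.toEuclideanLin P (Matrix.toEuclideanLin Q z) := by
  simp [Matrix.toEuclideanLin_apply, Matrix.mulVec_mulVec]

lemma satV_far {ι : Type*} [Fintype ι] {r : ℝ} (hr : 0 < r) {u v : EuclideanSpace ℝ ι}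
    (hu : r < ‖u‖) (hv : r < ‖v‖) :
    ‖satV r u - satV r v‖ ≤ 2 * r / ‖u‖ * ‖u - v‖ := by
  have hu0 : (0:ℝ) < ‖u‖ := hr.trans hu
  have hv0 : (0:ℝ) < ‖v‖ := hr.trans hv
  rw [satV, satV, if_neg (not_le.2 hu), if_neg (not_le.2 hv)]
  have key : (r / ‖u‖) • u - (r / ‖v‖) • v
      = (r / ‖u‖) • (u - v) + ((r / ‖u‖) - (r / ‖v‖)) • v := by
    rw [smul_sub, sub_smul]; abel
  rw [key]
  have h1 : ‖(r / ‖u‖) • (u - v)‖ = r / ‖u‖ * ‖u - v‖ := by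
    rw [norm_smul, Real.norm_eq_abs, abs_of_pos (by positivity)]
  have habs : |‖v‖ - ‖u‖| ≤ ‖u - v‖ := by
    rw [abs_sub_comm]
    exact abs_norm_sub_norm_le u v
  have h2 : ‖((r / ‖u‖) - (r / ‖v‖)) • v‖ ≤ r / ‖u‖ * ‖u - v‖ := by
    rw [norm_smul, Real.norm_eq_abs]
    have e1 : (r / ‖u‖) - (r / ‖v‖) = r * (‖v‖ - ‖u‖) / (‖u‖ * ‖v‖) := by
      field_simp
    rw [e1, abs_div, abs_mul, abs_of_pos hr, abs_of_pos (mul_pos hu0 hv0)]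
    rw [div_mul_eq_mul_div, div_le_iff₀ (mul_pos hu0 hv0)]
    have h3 : r * |‖v‖ - ‖u‖| ≤ r * ‖u - v‖ :=
      mul_le_mul_of_nonneg_left habs hr.le
    have e2 : r / ‖u‖ * ‖u - v‖ * (‖u‖ * ‖v‖) = r * ‖u - v‖ * ‖v‖ := by
      field_simp
    rw [e2]
    nlinarith [norm_nonneg v, abs_nonneg (‖v‖ - ‖u‖)]
  calc ‖(r / ‖u‖) • (u - v) + ((r / ‖u‖) - (r / ‖v‖)) • v‖
      ≤ ‖(r / ‖u‖) • (u - v)‖ + ‖((r / ‖u‖) - (r / ‖v‖)) • v‖ := norm_add_le _ _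
    _ ≤ r / ‖u‖ * ‖u - v‖ + r / ‖u‖ * ‖u - v‖ := by rw [h1]; linarith
    _ = 2 * r / ‖u‖ * ‖u - v‖ := by ring

private lemma satV_mixed {ι : Type*} [Fintype ι] {r : ℝ} {u v : EuclideanSpace ℝ ι}
    (hu : ‖u‖ ≤ r) (hv : r < ‖v‖) :
    ‖satV r u - satV r v‖ ≤ 2 * ‖u - v‖ := by
  have hv0 : (0:ℝ) < ‖v‖ := (norm_nonneg u).trans_lt (hu.trans_lt hv)
  rw [satV, satV, if_pos hu, if_neg (not_le.2 hv)]
  have e : u - (r / ‖v‖) • v = (u - v) + (1 - r / ‖v‖) • v := by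
    rw [sub_smul, one_smul]; abel
  rw [e]
  have h2 : ‖(1 - r / ‖v‖) • v‖ = ‖v‖ - r := by
    rw [norm_smul, Real.norm_eq_abs, abs_of_nonneg (by
      rw [sub_nonneg, div_le_one hv0]; exact hv.le)]
    field_simp
  have h3 : ‖v‖ - r ≤ ‖u - v‖ := by
    have := norm_sub_norm_le v u
    rw [norm_sub_rev] at this
    linarith
  calc ‖(u - v) + (1 - r / ‖v‖) • v‖ ≤ ‖u - v‖ + ‖(1 - r / ‖v‖) • v‖ := norm_add_le _ _
    _ ≤ 2 * ‖u - v‖ := by rw [h2]; linarith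

lemma satV_near {ι : Type*} [Fintype ι] {r : ℝ} (hr : 0 < r) (u v : EuclideanSpace ℝ ι) :
    ‖satV r u - satV r v‖ ≤ 2 * ‖u - v‖ := by
  by_cases hu : ‖u‖ ≤ r <;> by_cases hv : ‖v‖ ≤ r
  · rw [satV, satV, if_pos hu, if_pos hv]
    linarith [norm_nonneg (u - v)]
  · exact satV_mixed hu (not_le.1 hv)
  · rw [norm_sub_rev, norm_sub_rev u v]
    exact satV_mixed hv (not_le.1 hu)
  · push_neg at hu hv
    have hu0 : (0:ℝ) < ‖u‖ := hr.trans hu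
    refine (satV_far hr hu hv).trans ?_
    have h : 2 * r / ‖u‖ ≤ 2 := by
      rw [div_le_iff₀ hu0]
      linarith
    exact mul_le_mul_of_nonneg_right h (norm_nonneg _)

variable {m' n₁ n₂ : Type*} [Fintype m'] [Fintype n₁] [Fintype n₂]
  [DecidableEq n₁] [DecidableEq n₂]

lemma norm_fromColumns_left_le (X : Matrix m' n₁ ℝ) (Y : Matrix m' n₂ ℝ) :
    ‖X‖ ≤ ‖Matrix.fromCols X Y‖ := by
  rw [Matrix.l2_opNorm_def X]
  refine ContinuousLinearMap.opNorm_le_bound _ (norm_nonneg _) fun x => ?_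
  set y : EuclideanSpace ℝ (n₁ ⊕ n₂) :=
    (WithLp.equiv 2 ((n₁ ⊕ n₂) → ℝ)).symm (Sum.elim (WithLp.equiv 2 (n₁ → ℝ) x) 0) with hy
  have harg : Matrix.fromCols X Y *ᵥ y = X *ᵥ (WithLp.equiv 2 (n₁ → ℝ) x) := by
    show Matrix.fromCols X Y *ᵥ (Sum.elim ((WithLp.equiv 2 (n₁ → ℝ)) x) 0) = _
    rw [Matrix.fromCols_mulVec_sumElim, Matrix.mulVec_zero, add_zero]
  have h1 : ((Matrix.toEuclideanLin ≪≫ₗ LinearMap.toContinuousLinearMap) X) x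
      = (EuclideanSpace.equiv m' ℝ).symm (Matrix.fromCols X Y *ᵥ y) := by
    rw [harg]; rfl
  have hnorm : ‖y‖ = ‖x‖ := by
    simp [hy, EuclideanSpace.norm_eq, Fintype.sum_sum_type]
  rw [h1, ← hnorm]
  exact (Matrix.fromCols X Y).l2_opNorm_mulVec y

lemma norm_fromColumns_right_le (X : Matrix m' n₁ ℝ) (Y : Matrix m' n₂ ℝ) :
    ‖Y‖ ≤ ‖Matrix.fromCols X Y‖ := by
  rw [Matrix.l2_opNorm_def Y]
  refine ContinuousLinearMap.opNorm_le_bound _ (norm_nonneg _) fun x => ?_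
  set y : EuclideanSpace ℝ (n₁ ⊕ n₂) :=
    (WithLp.equiv 2 ((n₁ ⊕ n₂) → ℝ)).symm (Sum.elim 0 (WithLp.equiv 2 (n₂ → ℝ) x)) with hy
  have harg : Matrix.fromCols X Y *ᵥ y = Y *ᵥ (WithLp.equiv 2 (n₂ → ℝ) x) := by
    show Matrix.fromCols X Y *ᵥ (Sum.elim 0 ((WithLp.equiv 2 (n₂ → ℝ)) x)) = _
    rw [Matrix.fromCols_mulVec_sumElim, Matrix.mulVec_zero, zero_add]
  have h1 : ((Matrix.toEuclideanLin ≪≫ₗ LinearMap.toContinuousLinearMap) Y) x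
      = (EuclideanSpace.equiv m' ℝ).symm (Matrix.fromCols X Y *ᵥ y) := by
    rw [harg]; rfl
  have hnorm : ‖y‖ = ‖x‖ := by
    simp [hy, EuclideanSpace.norm_eq, Fintype.sum_sum_type]
  rw [h1, ← hnorm]
  exact (Matrix.fromCols X Y).l2_opNorm_mulVec y

variable {a b c : Type*} [Fintype a] [Fintype b] [Fintype c]
  [DecidableEq a] [DecidableEq b] [DecidableEq c]

lemma isBoundedBilinearMap_matMul :
    IsBoundedBilinearMap ℝ (fun p : Matrix a b ℝ × Matrix b c ℝ => p.1 * p.2) where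
  add_left x y z := Matrix.add_mul x y z
  smul_left r x y := Matrix.smul_mul r x y
  add_right x y z := Matrix.mul_add x y z
  smul_right r x y := Matrix.mul_smul x r y
  bound := ⟨1, one_pos, fun x y => by simpa using Matrix.l2_opNorm_mul x y⟩

lemma isBoundedLinearMap_transpose :
    IsBoundedLinearMap ℝ (fun M : Matrix a b ℝ => Mᵀ) :=
  { map_add := fun x y => Matrix.transpose_add x y
    map_smul := fun r x => Matrix.transpose_smul r x
    bound := ⟨1, one_pos, fun M => by
      rw [one_mul, ← Matrix.conjTranspose_eq_transpose_of_trivial M]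
      exact (Matrix.l2_opNorm_conjTranspose M).le⟩ }

lemma isUnit_det_of_rank_eq (n' : ℕ) (S : Matrix (Fin n') (Fin n') ℝ)
    (h : S.rank = n') : IsUnit S.det := by
  rw [← Matrix.isUnit_iff_isUnit_det, ← Matrix.mulVec_surjective_iff_isUnit]
  have h2 : LinearMap.range S.mulVecLin = ⊤ := by
    apply Submodule.eq_top_of_finrank_eq
    rw [← Matrix.rank]
    simp [h]
  intro v
  have hv : v ∈ LinearMap.range S.mulVecLin := h2 ▸ Submodule.mem_top
  obtain ⟨w, hw⟩ := hv
  exact ⟨w, hw⟩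

end Aux

theorem saturated_pseudoinverse_feedback_local_lipschitz
    (n m κ : ℕ) (A : Matrix (Fin n) (Fin n) ℝ) (hA : IsUnit A.det)
    (hAnorm : opNorm2 A ≤ 1)
    (B : Matrix (Fin n) (Fin m) ℝ)
    (R : Matrix (Fin n) (Fin κ × Fin m) ℝ)
    (hR : ∀ (i : Fin n) (k : Fin κ) (j : Fin m), R i (k, j) = (A ^ (k : ℕ) * B) i j)
    (hrank : R.rank = n)
    (ub : ℝ) (hub : 0 < ub) :
    ∃ m₀ C : ℝ, 0 < m₀ ∧ 0 < C ∧
      ∀ (x : EuclideanSpace ℝ (Fin n)) (ϑ₁ : Matrix (Fin n) (Fin n) ℝ)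
        (ϑ₂ : Matrix (Fin n) (Fin κ × Fin m) ℝ),
        opNorm2 (Matrix.fromCols ϑ₁ ϑ₂ - Matrix.fromCols (A ^ κ) R) ≤ m₀ →
        ‖satV ub (Matrix.toEuclideanLin (rightPseudoInv ϑ₂ * ϑ₁) x)
            - satV ub (Matrix.toEuclideanLin (rightPseudoInv R * A ^ κ) x)‖ ≤
          C * opNorm2 (Matrix.fromCols ϑ₁ ϑ₂ - Matrix.fromCols (A ^ κ) R) := by
  classical
  set P := Matrix (Fin n) (Fin n) ℝ × Matrix (Fin n) (Fin κ × Fin m) ℝ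
  set θ₀ : P := (A ^ κ, R) with hθ₀
  -- invertibility of R Rᵀ
  have hSdet : IsUnit (R * Rᵀ).det := by
    apply isUnit_det_of_rank_eq
    rw [Matrix.rank_self_mul_transpose]
    exact hrank
  have hUnitS : IsUnit (R * Rᵀ) := (Matrix.isUnit_iff_isUnit_det _).2 hSdet
  have hAκdet : IsUnit (A ^ κ).det := by
    rw [Matrix.det_pow]; exact hA.pow κ
  -- the map f
  set f : P → Matrix (Fin κ × Fin m) (Fin n) ℝ :=
    fun p => p.2ᵀ * Ring.inverse (p.2 * p.2ᵀ) * p.1 with hf_def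
  have keyf : ∀ p : P, IsUnit (p.2 * p.2ᵀ) →
      rightPseudoInv p.2 * p.1 = f p := by
    intro p hp
    rw [hf_def]
    simp only [rightPseudoInv]
    rw [Matrix.nonsing_inv_eq_ringInverse]
  -- contDiffAt of f
  have hT : ContDiff ℝ 1 (fun p : P => p.2ᵀ) :=
    isBoundedLinearMap_transpose.contDiff.comp contDiff_snd
  have hS : ContDiff ℝ 1 (fun p : P => p.2 * p.2ᵀ) :=
    isBoundedBilinearMap_matMul.contDiff.comp (contDiff_snd.prodMk hT)
  have hinv : ContDiffAt ℝ 1 (fun p : P => Ring.inverse (p.2 * p.2ᵀ)) θ₀ := by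
    have h := contDiffAt_ringInverse ℝ (n := 1) hUnitS.unit
    rw [IsUnit.unit_spec] at h
    exact h.comp θ₀ hS.contDiffAt
  have h1 : ContDiffAt ℝ 1 (fun p : P => p.2ᵀ * Ring.inverse (p.2 * p.2ᵀ)) θ₀ :=
    isBoundedBilinearMap_matMul.contDiff.contDiffAt.comp θ₀ (hT.contDiffAt.prodMk hinv)
  have hf : ContDiffAt ℝ 1 f θ₀ :=
    isBoundedBilinearMap_matMul.contDiff.contDiffAt.comp θ₀ (h1.prodMk contDiff_fst.contDiffAt)
  obtain ⟨K, t, ht, hlip⟩ := hf.exists_lipschitzOnWith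
  -- the open set where p.2 * p.2ᵀ is a unit
  have hopen : IsOpen {p : P | IsUnit (p.2 * p.2ᵀ)} :=
    Units.isOpen.preimage hS.continuous
  have hmem : t ∩ {p : P | IsUnit (p.2 * p.2ᵀ)} ∈ nhds θ₀ :=
    Filter.inter_mem ht (hopen.mem_nhds hUnitS)
  obtain ⟨ε, hε, hball⟩ := Metric.mem_nhds_iff.1 hmem
  -- antilipschitz constant for N
  set N : Matrix (Fin κ × Fin m) (Fin n) ℝ := rightPseudoInv R * A ^ κ with hN
  have hRN : R * rightPseudoInv R = 1 := by
    rw [rightPseudoInv, ← Matrix.mul_assoc]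
    exact Matrix.mul_nonsing_inv _ hSdet
  have hleft : ((A ^ κ)⁻¹ * R) * N = 1 := by
    rw [hN, Matrix.mul_assoc, ← Matrix.mul_assoc R, hRN, Matrix.one_mul]
    exact Matrix.nonsing_inv_mul _ hAκdet
  have hNinj : LinearMap.ker (Matrix.toEuclideanLin N) = ⊥ := by
    rw [LinearMap.ker_eq_bot]
    intro z w hzw
    have h2 := congrArg (Matrix.toEuclideanLin ((A ^ κ)⁻¹ * R)) hzw
    rw [← toEuclideanLin_mul_apply, ← toEuclideanLin_mul_apply, hleft] at h2
    simpa [Matrix.toEuclideanLin_apply, Matrix.one_mulVec] using h2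
  obtain ⟨K₂, hK₂pos, hK₂⟩ := (Matrix.toEuclideanLin N).exists_antilipschitzWith hNinj
  have hanti : ∀ z : EuclideanSpace ℝ (Fin n), ‖z‖ ≤ (K₂ : ℝ) * ‖Matrix.toEuclideanLin N z‖ := by
    intro z
    have := hK₂.le_mul_dist z 0
    simpa [dist_zero_right, map_zero] using this
  set K' : ℝ := (K : ℝ) + 1 with hK'
  have hK'pos : (0:ℝ) < K' := by positivity
  set K₂' : ℝ := (K₂ : ℝ) with hK₂'
  have hK₂'pos : (0:ℝ) < K₂' := by exact_mod_cast hK₂pos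
  refine ⟨min (ε / 2) (1 / (2 * K' * K₂')), 4 * ub * K' * K₂', by positivity, by positivity,
    fun x ϑ₁ ϑ₂ hδ => ?_⟩
  set θ : P := (ϑ₁, ϑ₂) with hθ
  set D := Matrix.fromCols ϑ₁ ϑ₂ - Matrix.fromCols (A ^ κ) R with hD
  rw [opNorm2_eq] at hδ ⊢
  set δ : ℝ := ‖D‖ with hδdef
  have hδ0 : 0 ≤ δ := norm_nonneg _
  -- split the block matrix
  have hsplit : D = Matrix.fromCols (ϑ₁ - A ^ κ) (ϑ₂ - R) := by
    rw [hD]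
    ext i j
    cases j <;> simp [Matrix.fromCols]
  have h1n : ‖ϑ₁ - A ^ κ‖ ≤ δ := by
    rw [hδdef, hsplit]; exact norm_fromColumns_left_le _ _
  have h2n : ‖ϑ₂ - R‖ ≤ δ := by
    rw [hδdef, hsplit]; exact norm_fromColumns_right_le _ _
  have hdist : dist θ θ₀ ≤ δ := by
    rw [Prod.dist_eq]
    exact max_le (by rwa [dist_eq_norm]) (by rwa [dist_eq_norm])
  have hδε : δ < ε := by
    have := min_le_left (ε / 2) (1 / (2 * K' * K₂'))
    linarith [hδ, hε]
  have hθball : θ ∈ Metric.ball θ₀ ε := lt_of_le_of_lt hdist hδε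
  have hθmem := hball hθball
  have hθ₀mem := hball (Metric.mem_ball_self hε)
  -- rewrite goal in terms of f
  have key1 : rightPseudoInv ϑ₂ * ϑ₁ = f θ := keyf θ hθmem.2
  have key2 : rightPseudoInv R * A ^ κ = f θ₀ := keyf θ₀ hθ₀mem.2
  rw [key1, show N = f θ₀ from hN.trans key2]
  -- Lipschitz estimate on matrices
  have hMN : ‖f θ - f θ₀‖ ≤ K' * δ := by
    have h := hlip.dist_le_mul θ hθmem.1 θ₀ hθ₀mem.1
    rw [dist_eq_norm] at h
    calc ‖f θ - f θ₀‖ ≤ (K : ℝ) * dist θ θ₀ := h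
      _ ≤ K' * δ := by
          apply mul_le_mul (by rw [hK']; linarith [NNReal.coe_nonneg K]) hdist
            dist_nonneg hK'pos.le
  set u := Matrix.toEuclideanLin (f θ) x with hu
  set v := Matrix.toEuclideanLin (f θ₀) x with hv
  have huv : ‖u - v‖ ≤ K' * δ * ‖x‖ := by
    have e : u - v = Matrix.toEuclideanLin (f θ - f θ₀) x := by
      rw [map_sub]; rfl
    rw [e]
    calc ‖Matrix.toEuclideanLin (f θ - f θ₀) x‖ ≤ ‖f θ - f θ₀‖ * ‖x‖ :=
        norm_toEuclideanLin_apply_le _ _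
      _ ≤ K' * δ * ‖x‖ := mul_le_mul_of_nonneg_right hMN (norm_nonneg _)
  have hxv : ‖x‖ ≤ K₂' * ‖v‖ := by
    rw [hv, ← (hN.trans key2)]; exact hanti x
  have hδm : δ ≤ 1 / (2 * K' * K₂') :=
    hδ.trans (min_le_right _ _)
  have hK'δ : K' * δ * (2 * K₂') ≤ 1 := by
    rw [div_eq_inv_mul] at hδm
    have h := mul_le_mul_of_nonneg_left hδm hK'pos.le
    calc K' * δ * (2 * K₂') ≤ K' * ((2 * K' * K₂')⁻¹ * 1) * (2 * K₂') :=
        mul_le_mul_of_nonneg_right h (by positivity)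
      _ = 1 := by field_simp
  rcases le_or_gt ‖x‖ (2 * ub * K₂') with hxle | hxgt
  · -- small x : use the global 2-Lipschitz bound for satV
    calc ‖satV ub u - satV ub v‖ ≤ 2 * ‖u - v‖ := satV_near hub u v
      _ ≤ 2 * (K' * δ * ‖x‖) := by linarith
      _ ≤ 2 * (K' * δ * (2 * ub * K₂')) := by
          have := mul_le_mul_of_nonneg_left hxle (by positivity : (0:ℝ) ≤ K' * δ)
          linarith
      _ = 4 * ub * K' * K₂' * δ := by ring
  · -- large x : both vectors are saturated
    have hx0 : (0:ℝ) < ‖x‖ := lt_trans (by positivity) hxgt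
    have h2K : (0:ℝ) < 2 * K₂' := by positivity
    have huvx : ‖u - v‖ * (2 * K₂') ≤ ‖x‖ := by
      calc ‖u - v‖ * (2 * K₂') ≤ K' * δ * ‖x‖ * (2 * K₂') :=
          mul_le_mul_of_nonneg_right huv h2K.le
        _ = K' * δ * (2 * K₂') * ‖x‖ := by ring
        _ ≤ 1 * ‖x‖ := mul_le_mul_of_nonneg_right hK'δ hx0.le
        _ = ‖x‖ := one_mul _
    have hvlb : 2 * ub < ‖v‖ := by
      have : 2 * ub * K₂' < K₂' * ‖v‖ := lt_of_lt_of_le hxgt hxv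
      nlinarith
    have hvn : ub < ‖v‖ := by linarith
    have hulb : ‖v‖ - ‖u - v‖ ≤ ‖u‖ := by
      have h := norm_sub_norm_le v u
      rw [norm_sub_rev] at h
      linarith
    have hux : ‖x‖ ≤ 2 * K₂' * ‖u‖ := by nlinarith
    have hun : ub < ‖u‖ := by nlinarith
    have hu0 : (0:ℝ) < ‖u‖ := lt_trans hub hun
    calc ‖satV ub u - satV ub v‖ ≤ 2 * ub / ‖u‖ * ‖u - v‖ := satV_far hub hun hvn
      _ ≤ 2 * ub / ‖u‖ * (K' * δ * ‖x‖) := by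
          apply mul_le_mul_of_nonneg_left huv (by positivity)
      _ ≤ 2 * ub / ‖u‖ * (K' * δ * (2 * K₂' * ‖u‖)) := by
          apply mul_le_mul_of_nonneg_left _ (by positivity)
          exact mul_le_mul_of_nonneg_left hux (by positivity)
      _ = 4 * ub * K' * K₂' * δ := by field_simp; ring

end
end

section
/- Fix n,d ∈ ℕ, constants σ_w, γ, c_PE, p_PE > 0, u_max ≥ 0, c₁ ≥ 0, θ* ∈ ℝ^{d×n}, x₀ ∈ ℝⁿ, δ ∈ (0,1), functions χ₁,χ₃,σ₂ ∈ 𝒦∞ that are 1-SE, χ₄ ∈ 𝒦∞ that is 2-SE, χ₂,σ₁ ∈ 𝒦∞, and an APB function χ₅ : [0,∞) → [0,∞). Define w̄(t,δ)=σ_w√(2n ln(nπ²t²/(3δ))) for t≥1 and w̄(0,δ)=0; x̄(t,δ,x₀)=χ₁(t)+χ₂(‖x₀‖)+χ₃(tσ₁(u_max))+χ₄(tσ₂(w̄(t,δ)))+c₁; z̄(t,δ,x₀)=χ₅(√(x̄(t−1,δ,x₀)²+u_max²)); β_max(t,δ,x₀)=Σ_{i=1}^{t}z̄(i,δ,x₀)²+γ;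 e(t,δ,x₀)=(c_PE p_PE(t−1)/4+γ)^{−1/2}·(γ^{1/2}‖θ*‖_F+σ_w√(2n(ln(3n/δ)+(d/2)ln(β_max(t,δ/3,x₀)/γ)))). Then lim_{t→∞} e(t,δ,x₀) = 0. -/
open MeasureTheory ProbabilityTheory Filter
open scoped RealInnerProductSpace

noncomputable section

instance matrixMeasurableSpace {m n : Type*} : MeasurableSpace (Matrix m n ℝ) :=
  MeasurableSpace.pi

/-- Frobenius norm of a real matrix. -/
noncomputable def frobNorm {m n : Type*} [Fintype m] [Fintype n] (A : Matrix m n ℝ) : ℝ :=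
  Real.sqrt (∑ i, ∑ j, (A i j) ^ 2)

/-- Class 𝒦: continuous, strictly increasing on `[0,∞)`, vanishing at `0`, nonnegative. -/
def IsClassK (h : ℝ → ℝ) : Prop :=
  ContinuousOn h (Set.Ici 0) ∧ StrictMonoOn h (Set.Ici 0) ∧ h 0 = 0 ∧ ∀ r, 0 ≤ r → 0 ≤ h r

/-- Class 𝒦∞: class 𝒦 and unbounded. -/
def IsKInfty (h : ℝ → ℝ) : Prop :=
  IsClassK h ∧ Tendsto h atTop atTop

/-- `k`-order sub-exponential: `ln h(r^k) = o(r)` as `r → ∞`. -/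
def IsSE (k : ℕ) (h : ℝ → ℝ) : Prop :=
  (fun r => Real.log (h (r ^ k))) =o[atTop] fun r => r

/-- Asymptotically polynomially bounded. -/
def IsAPB (h : ℝ → ℝ) : Prop :=
  ∃ k : ℕ, h =O[atTop] fun r : ℝ => r ^ k

/-- Class ℒ: nonnegative, nonincreasing, converging to 0. -/
def IsClassL (η : ℕ → ℝ) : Prop :=
  (∀ t, 0 ≤ η t) ∧ Antitone η ∧ Tendsto η atTop (nhds 0)

/-- Class 𝒦ℒ. -/
def IsClassKL (β : ℝ → ℕ → ℝ) : Prop :=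
  (∀ t, IsClassK fun r => β r t) ∧
    ∀ r, 0 ≤ r → Antitone (fun t => β r t) ∧ Tendsto (fun t => β r t) atTop (nhds 0)

/-- Topological support of a measure. -/
def msupport {E : Type*} [TopologicalSpace E] [MeasurableSpace E] (μ : Measure E) : Set E :=
  {x | ∀ U : Set E, IsOpen U → x ∈ U → 0 < μ U}

/-- The scalar parameters and comparison functions appearing in the deterministic bounds. -/
structure BParams where
  n : ℕ
  d : ℕ
  σw : ℝ
  γ : ℝ
  cPE : ℝ
  pPE : ℝ
  x0n : ℝ
  θF : ℝ
  χ₁ : ℝ → ℝ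
  χ₂ : ℝ → ℝ
  χ₃ : ℝ → ℝ
  χ₄ : ℝ → ℝ
  σ₁ : ℝ → ℝ
  σ₂ : ℝ → ℝ
  χ₅ : ℝ → ℝ
  umax : ℝ
  c₁ : ℝ

/-- Process-noise bound `w̄(t,δ)`. -/
noncomputable def wbar (P : BParams) (δ : ℝ) (t : ℕ) : ℝ :=
  if t = 0 then 0
  else P.σw * Real.sqrt (2 * P.n * Real.log (P.n * Real.pi ^ 2 * (t : ℝ) ^ 2 / (3 * δ)))

/-- State bound `x̄(t,δ,x₀)`. -/
noncomputable def xbar (P : BParams) (δ : ℝ) (t : ℕ) : ℝ :=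
  P.χ₁ t + P.χ₂ P.x0n + P.χ₃ (t * P.σ₁ P.umax) + P.χ₄ (t * P.σ₂ (wbar P δ t)) + P.c₁

/-- Regressor bound `z̄(t,δ,x₀)`. -/
noncomputable def zbar (P : BParams) (δ : ℝ) (t : ℕ) : ℝ :=
  P.χ₅ (Real.sqrt ((xbar P δ (t - 1)) ^ 2 + P.umax ^ 2))

/-- Gramian upper bound `β_max(t,δ,x₀)`. -/
noncomputable def betaMax (P : BParams) (δ : ℝ) (t : ℕ) : ℝ :=
  (∑ i ∈ Finset.Icc 1 t, (zbar P δ i) ^ 2) + P.γ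

/-- Estimation error bound `e(t,δ,x₀)`. -/
noncomputable def eBound (P : BParams) (δ : ℝ) (t : ℕ) : ℝ :=
  (Real.sqrt (P.cPE * P.pPE * ((t : ℝ) - 1) / 4 + P.γ))⁻¹ *
    (Real.sqrt P.γ * P.θF +
      P.σw * Real.sqrt (2 * P.n * (Real.log (3 * P.n / δ) +
        ((P.d : ℝ) / 2) * Real.log (betaMax P (δ / 3) t / P.γ))))

/-- Burn-in time bound `T_burn-in(δ,x₀)` (with value `⊤` when no finite time works). -/
noncomputable def Tburnin (P : BParams) (δ : ℝ) : ℕ∞ :=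
  sInf {T : ℕ∞ | ∃ T' : ℕ, T = (T' : ℕ∞) ∧ ∀ t : ℕ, T' ≤ t →
    (2 / ((1 - Real.log 2) * P.pPE)) *
        ((P.d : ℝ) * Real.log (1 + 16 * (∑ i ∈ Finset.Icc 1 t, (zbar P (δ / 3) i) ^ 2) /
            (P.cPE * P.pPE * ((t : ℝ) - 1))) +
          Real.log (Real.pi ^ 2 * ((t : ℝ) - (T' : ℝ) + 1) ^ 2 / (2 * δ))) + 1 ≤ (t : ℝ)}

/-- Convergence time bound `T_converge(δ,x₀)`. -/
noncomputable def Tconverge (P : BParams) (ϑbar : ℝ) (δ : ℝ) : ℕ∞ :=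
  max (Tburnin P δ)
    (sInf {T : ℕ∞ | ∃ T' : ℕ, T = (T' : ℕ∞) ∧ ∀ t : ℕ, T' ≤ t → eBound P δ t ≤ ϑbar})

/-- Contained time bound `T_contained(δ,x₀)`. -/
noncomputable def Tcontained {N : ℕ} (P : BParams) (XRPI : Set (EuclideanSpace ℝ (Fin N)))
    (δ : ℝ) : ℕ∞ :=
  sSup {T : ℕ∞ | ∃ T' : ℕ, T = (T' : ℕ∞) ∧
    {x : EuclideanSpace ℝ (Fin N) | ‖x‖ ≤ xbar P (δ / 3) T'} ⊆ XRPI}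

section AuxZero
open Real Asymptotics

private lemma classK_pos {h : ℝ → ℝ} (hh : IsClassK h) {r : ℝ} (hr : 0 < r) : 0 < h r := by
  have h2 := hh.2.1 Set.self_mem_Ici (Set.mem_Ici.mpr hr.le) hr
  rwa [hh.2.2.1] at h2

private lemma sqrt_tendsto_atTop : Tendsto Real.sqrt atTop atTop := by
  rw [tendsto_atTop]
  intro b
  filter_upwards [eventually_ge_atTop ((max b 0) ^ 2)] with x hx
  calc b ≤ max b 0 := le_max_left _ _
    _ = Real.sqrt ((max b 0) ^ 2) := (Real.sqrt_sq (le_max_right _ _)).symm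
    _ ≤ Real.sqrt x := Real.sqrt_le_sqrt hx

private lemma se1_exp {h : ℝ → ℝ} (hK : IsKInfty h) (hSE : IsSE 1 h) {ε : ℝ} (hε : 0 < ε) :
    ∀ᶠ r : ℝ in atTop, h r ≤ exp (ε * r) := by
  filter_upwards [hSE.def hε, eventually_gt_atTop (0 : ℝ)] with r h1 h2
  rw [pow_one] at h1
  have hpos : 0 < h r := classK_pos hK.1 h2
  have hlog : Real.log (h r) ≤ ε * r := by
    rw [Real.norm_eq_abs, Real.norm_eq_abs, abs_of_pos h2] at h1
    exact (abs_le.mp h1).2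
  calc h r = exp (Real.log (h r)) := (exp_log hpos).symm
    _ ≤ _ := exp_le_exp.mpr hlog

private lemma se2_exp {h : ℝ → ℝ} (hK : IsKInfty h) (hSE : IsSE 2 h) {ε : ℝ} (hε : 0 < ε) :
    ∀ᶠ r : ℝ in atTop, h (r ^ 2) ≤ exp (ε * r) := by
  filter_upwards [hSE.def hε, eventually_gt_atTop (0 : ℝ)] with r h1 h2
  have hpos : 0 < h (r ^ 2) := classK_pos hK.1 (by positivity)
  have hlog : Real.log (h (r ^ 2)) ≤ ε * r := by
    rw [Real.norm_eq_abs, Real.norm_eq_abs, abs_of_pos h2] at h1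
    exact (abs_le.mp h1).2
  calc h (r ^ 2) = exp (Real.log (h (r ^ 2))) := (exp_log hpos).symm
    _ ≤ _ := exp_le_exp.mpr hlog

private lemma wbar_nonneg (P : BParams) (hσw : 0 ≤ P.σw) (δ' : ℝ) (t : ℕ) :
    0 ≤ wbar P δ' t := by
  unfold wbar
  split
  · exact le_refl _
  · positivity

private lemma xbar_terms (P : BParams) (δ' : ℝ) (hσw : 0 ≤ P.σw) (hx0 : 0 ≤ P.x0n)
    (hc₁ : 0 ≤ P.c₁) (humax : 0 ≤ P.umax)
    (h1 : IsClassK P.χ₁) (h2 : IsClassK P.χ₂) (h3 : IsClassK P.χ₃) (h4 : IsClassK P.χ₄)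
    (hs1 : IsClassK P.σ₁) (hs2 : IsClassK P.σ₂) (t : ℕ) :
    P.χ₁ t ≤ xbar P δ' t ∧ 0 ≤ xbar P δ' t := by
  have w0 := wbar_nonneg P hσw δ' t
  have b1 : 0 ≤ P.σ₁ P.umax := hs1.2.2.2 _ humax
  have b2 : 0 ≤ P.σ₂ (wbar P δ' t) := hs2.2.2.2 _ w0
  have a1 : (0:ℝ) ≤ P.χ₁ t := h1.2.2.2 _ (Nat.cast_nonneg t)
  have a2 : (0:ℝ) ≤ P.χ₂ P.x0n := h2.2.2.2 _ hx0
  have a3 : (0:ℝ) ≤ P.χ₃ (t * P.σ₁ P.umax) := h3.2.2.2 _ (by positivity)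
  have a4 : (0:ℝ) ≤ P.χ₄ (t * P.σ₂ (wbar P δ' t)) := h4.2.2.2 _ (by positivity)
  unfold xbar
  constructor <;> linarith

private lemma xbar_tendsto (P : BParams) (δ' : ℝ) (hσw : 0 ≤ P.σw) (hx0 : 0 ≤ P.x0n)
    (hc₁ : 0 ≤ P.c₁) (humax : 0 ≤ P.umax)
    (h1 : IsKInfty P.χ₁) (h2 : IsClassK P.χ₂) (h3 : IsClassK P.χ₃) (h4 : IsClassK P.χ₄)
    (hs1 : IsClassK P.σ₁) (hs2 : IsClassK P.σ₂) :
    Tendsto (fun t : ℕ => xbar P δ' t) atTop atTop :=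
  tendsto_atTop_mono
    (fun t => (xbar_terms P δ' hσw hx0 hc₁ humax h1.1 h2 h3 h4 hs1 hs2 t).1)
    (h1.2.comp tendsto_natCast_atTop_atTop)

private lemma sigma2_wbar_le (P : BParams) (δ' : ℝ) (hδ' : 0 < δ') (hσw : 0 < P.σw)
    (hs2 : IsKInfty P.σ₂ ∧ IsSE 1 P.σ₂) :
    ∀ᶠ t : ℕ in atTop, P.σ₂ (wbar P δ' t) ≤ t := by
  by_cases hn : P.n = 0
  · have hw : ∀ t : ℕ, wbar P δ' t = 0 := by
      intro t
      unfold wbar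
      split
      · rfl
      · simp [hn]
    filter_upwards with t
    rw [hw, hs2.1.1.2.2.1]
    exact Nat.cast_nonneg t
  · have hn1 : 1 ≤ P.n := Nat.one_le_iff_ne_zero.mpr hn
    have hnR : (1:ℝ) ≤ (P.n : ℝ) := by exact_mod_cast hn1
    have hnpos : (0:ℝ) < (P.n : ℝ) := by linarith
    have hApos : (0:ℝ) < (P.n : ℝ) * Real.pi ^ 2 / (3 * δ') := by
      apply div_pos (mul_pos hnpos (pow_pos Real.pi_pos 2)) (by linarith)
    set A : ℝ := (P.n : ℝ) * Real.pi ^ 2 / (3 * δ') with hA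
    -- formula for wbar at t ≥ 1
    have hwf : ∀ t : ℕ, 1 ≤ t →
        wbar P δ' t = P.σw * Real.sqrt (2 * P.n * Real.log ((P.n : ℝ) * Real.pi ^ 2 * (t:ℝ) ^ 2 / (3 * δ'))) := by
      intro t ht
      unfold wbar
      rw [if_neg (by omega)]
    have hlogsplit : ∀ t : ℕ, 1 ≤ t →
        Real.log ((P.n : ℝ) * Real.pi ^ 2 * (t:ℝ) ^ 2 / (3 * δ')) = Real.log A + 2 * Real.log t := by
      intro t ht
      have ht0 : (0:ℝ) < (t:ℝ) := by exact_mod_cast Nat.lt_of_lt_of_le Nat.zero_lt_one ht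
      have heq : (P.n : ℝ) * Real.pi ^ 2 * (t:ℝ) ^ 2 / (3 * δ') = A * (t:ℝ) ^ 2 := by
        rw [hA]; ring
      rw [heq, Real.log_mul (ne_of_gt hApos) (by positivity), Real.log_pow]
      norm_num
    -- tendsto of wbar
    have hwten : Tendsto (fun t : ℕ => wbar P δ' t) atTop atTop := by
      have hsq : Tendsto (fun t : ℕ => ((P.n : ℝ) * Real.pi ^ 2 / (3 * δ')) * (t:ℝ) ^ 2) atTop atTop := by
        apply Tendsto.const_mul_atTop hApos
        exact (tendsto_pow_atTop (two_ne_zero)).comp tendsto_natCast_atTop_atTop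
      have hsq' : Tendsto (fun t : ℕ => (P.n : ℝ) * Real.pi ^ 2 * (t:ℝ) ^ 2 / (3 * δ')) atTop atTop := by
        apply hsq.congr
        intro t
        ring
      have h1 : Tendsto (fun t : ℕ =>
          P.σw * Real.sqrt (2 * P.n * Real.log ((P.n : ℝ) * Real.pi ^ 2 * (t:ℝ) ^ 2 / (3 * δ'))))
          atTop atTop := by
        apply Tendsto.const_mul_atTop hσw
        apply sqrt_tendsto_atTop.comp
        apply Tendsto.const_mul_atTop (by positivity : (0:ℝ) < 2 * P.n)
        exact Real.tendsto_log_atTop.comp hsq'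
      apply h1.congr'
      filter_upwards [eventually_ge_atTop 1] with t ht
      exact (hwf t ht).symm
    -- wbar t ≤ log t eventually
    have hwlog : ∀ᶠ t : ℕ in atTop, wbar P δ' t ≤ Real.log t := by
      set B := Real.log A with hB
      set C : ℝ := P.σw ^ 2 * (2 * P.n) with hC
      have hCnn : 0 ≤ C := by positivity
      have key : ∀ᶠ y : ℝ in atTop, P.σw * Real.sqrt (2 * P.n * (B + 2 * y)) ≤ y := by
        have h2 : Tendsto (fun y : ℝ => y * y - C * (B + 2 * y)) atTop atTop := by
          have heq : (fun y : ℝ => y * y - C * (B + 2 * y))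
              = fun y => y * (y + (-(2 * C))) + (-(C * B)) := by
            funext y; ring
          rw [heq]
          exact tendsto_atTop_add_const_right _ _
            (tendsto_id.atTop_mul_atTop₀ (tendsto_atTop_add_const_right _ _ tendsto_id))
        filter_upwards [h2.eventually_ge_atTop 0, eventually_ge_atTop (0:ℝ)] with y hy hy0
        have hXle : C * (B + 2 * y) ≤ y * y := by linarith
        have hrw : P.σw * Real.sqrt (2 * P.n * (B + 2 * y)) = Real.sqrt (C * (B + 2 * y)) := by
          rw [hC, show P.σw ^ 2 * (2 * (P.n:ℝ)) * (B + 2 * y) = P.σw ^ 2 * (2 * (P.n:ℝ) * (B + 2 * y)) from by ring,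
            Real.sqrt_mul (sq_nonneg _), Real.sqrt_sq hσw.le]
        rw [hrw]
        calc Real.sqrt (C * (B + 2 * y)) ≤ Real.sqrt (y * y) := Real.sqrt_le_sqrt hXle
          _ = y := Real.sqrt_mul_self hy0
      have hlogt : Tendsto (fun t : ℕ => Real.log t) atTop atTop :=
        Real.tendsto_log_atTop.comp tendsto_natCast_atTop_atTop
      filter_upwards [hlogt.eventually key, eventually_ge_atTop 1] with t h1 ht
      rw [hwf t ht, hlogsplit t ht]
      exact h1
    -- conclude
    have hexp := se1_exp hs2.1 hs2.2 one_pos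
    filter_upwards [hwten.eventually hexp, hwlog, eventually_ge_atTop 1] with t h1 h2 ht
    have ht0 : (0:ℝ) < (t:ℝ) := by exact_mod_cast Nat.lt_of_lt_of_le Nat.zero_lt_one ht
    calc P.σ₂ (wbar P δ' t) ≤ exp (1 * wbar P δ' t) := h1
      _ ≤ exp (Real.log t) := exp_le_exp.mpr (by linarith)
      _ = t := Real.exp_log ht0

private lemma exp_seq_tendsto {c : ℝ} (hc : 0 < c) :
    Tendsto (fun t : ℕ => exp (c * t)) atTop atTop :=
  Real.tendsto_exp_atTop.comp (tendsto_natCast_atTop_atTop.const_mul_atTop hc)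

private lemma xbar_le_exp (P : BParams) (δ' : ℝ) (hδ' : 0 < δ') (hσw : 0 < P.σw)
    (hx0 : 0 ≤ P.x0n) (hc₁ : 0 ≤ P.c₁) (humax : 0 ≤ P.umax)
    (h1 : IsKInfty P.χ₁ ∧ IsSE 1 P.χ₁) (h2 : IsKInfty P.χ₂)
    (h3 : IsKInfty P.χ₃ ∧ IsSE 1 P.χ₃) (h4 : IsKInfty P.χ₄ ∧ IsSE 2 P.χ₄)
    (hs1 : IsKInfty P.σ₁) (hs2 : IsKInfty P.σ₂ ∧ IsSE 1 P.σ₂)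
    {ε : ℝ} (hε : 0 < ε) :
    ∀ᶠ t : ℕ in atTop, xbar P δ' t ≤ exp (ε * t) := by
  have hε2 : 0 < ε / 2 := by positivity
  have htexp := exp_seq_tendsto hε2
  have T1 : ∀ᶠ t : ℕ in atTop, P.χ₁ t ≤ exp (ε / 2 * t) :=
    tendsto_natCast_atTop_atTop.eventually (se1_exp h1.1 h1.2 hε2)
  have T2 : ∀ᶠ t : ℕ in atTop, P.χ₂ P.x0n ≤ exp (ε / 2 * t) :=
    htexp.eventually_ge_atTop _
  have T5 : ∀ᶠ t : ℕ in atTop, P.c₁ ≤ exp (ε / 2 * t) :=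
    htexp.eventually_ge_atTop _
  have T3 : ∀ᶠ t : ℕ in atTop, P.χ₃ (t * P.σ₁ P.umax) ≤ exp (ε / 2 * t) := by
    rcases eq_or_lt_of_le (hs1.1.2.2.2 _ humax) with hc | hc
    · filter_upwards with t
      rw [← hc, mul_zero, h3.1.1.2.2.1]
      positivity
    · have hdiv : 0 < ε / 2 / P.σ₁ P.umax := by positivity
      have hmul : Tendsto (fun t : ℕ => (t:ℝ) * P.σ₁ P.umax) atTop atTop :=
        tendsto_natCast_atTop_atTop.atTop_mul_const hc
      filter_upwards [hmul.eventually (se1_exp h3.1 h3.2 hdiv)] with t h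
      calc P.χ₃ (t * P.σ₁ P.umax) ≤ exp (ε / 2 / P.σ₁ P.umax * ((t:ℝ) * P.σ₁ P.umax)) := h
        _ = exp (ε / 2 * t) := by
            congr 1
            field_simp
  have T4 : ∀ᶠ t : ℕ in atTop, P.χ₄ (t * P.σ₂ (wbar P δ' t)) ≤ exp (ε / 2 * t) := by
    have hσle := sigma2_wbar_le P δ' hδ' hσw hs2
    have h4c : ∀ᶠ t : ℕ in atTop, P.χ₄ ((t:ℝ) ^ 2) ≤ exp (ε / 2 * t) :=
      tendsto_natCast_atTop_atTop.eventually (se2_exp h4.1 h4.2 hε2)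
    filter_upwards [hσle, h4c] with t hsle hc
    have hb2 : 0 ≤ P.σ₂ (wbar P δ' t) := hs2.1.1.2.2.2 _ (wbar_nonneg P hσw.le δ' t)
    have htnn : (0:ℝ) ≤ (t:ℝ) := Nat.cast_nonneg t
    have harg : (t:ℝ) * P.σ₂ (wbar P δ' t) ≤ (t:ℝ) ^ 2 := by nlinarith
    have hmono := h4.1.1.2.1.monotoneOn
    calc P.χ₄ (t * P.σ₂ (wbar P δ' t)) ≤ P.χ₄ ((t:ℝ) ^ 2) :=
          hmono (Set.mem_Ici.mpr (by positivity)) (Set.mem_Ici.mpr (by positivity)) harg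
      _ ≤ exp (ε / 2 * t) := hc
  filter_upwards [T1, T2, T3, T4, T5, htexp.eventually_ge_atTop 5] with t ht1 ht2 ht3 ht4 ht5 h5
  have hEpos : (0:ℝ) < exp (ε / 2 * t) := exp_pos _
  have hxb : xbar P δ' t ≤ 5 * exp (ε / 2 * t) := by
    unfold xbar
    linarith
  calc xbar P δ' t ≤ 5 * exp (ε / 2 * t) := hxb
    _ ≤ exp (ε / 2 * t) * exp (ε / 2 * t) := by nlinarith
    _ = exp (ε * t) := by rw [← Real.exp_add]; congr 1; ring

private lemma zbar_sq_le (P : BParams) (δ' : ℝ) (hδ' : 0 < δ') (hσw : 0 < P.σw)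
    (hx0 : 0 ≤ P.x0n) (hc₁ : 0 ≤ P.c₁) (humax : 0 ≤ P.umax)
    (h1 : IsKInfty P.χ₁ ∧ IsSE 1 P.χ₁) (h2 : IsKInfty P.χ₂)
    (h3 : IsKInfty P.χ₃ ∧ IsSE 1 P.χ₃) (h4 : IsKInfty P.χ₄ ∧ IsSE 2 P.χ₄)
    (hs1 : IsKInfty P.σ₁) (hs2 : IsKInfty P.σ₂ ∧ IsSE 1 P.σ₂) (h5 : IsAPB P.χ₅)
    {ε : ℝ} (hε : 0 < ε) :
    ∀ᶠ i : ℕ in atTop, (zbar P δ' i) ^ 2 ≤ exp (ε * i) := by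
  obtain ⟨k, hk⟩ := h5
  obtain ⟨c, hc⟩ := isBigO_iff.mp hk
  set s : ℕ → ℝ := fun i => Real.sqrt ((xbar P δ' (i - 1)) ^ 2 + P.umax ^ 2) with hs
  have hsnn : ∀ i, 0 ≤ s i := fun i => Real.sqrt_nonneg _
  have hsub : Tendsto (fun i : ℕ => i - 1) atTop atTop := tendsto_sub_atTop_nat 1
  have hxnn : ∀ j : ℕ, 0 ≤ xbar P δ' j := fun j =>
    (xbar_terms P δ' hσw.le hx0 hc₁ humax h1.1.1 h2.1 h3.1.1 h4.1.1 hs1.1 hs2.1.1 j).2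
  have hstend : Tendsto s atTop atTop := by
    apply tendsto_atTop_mono ?_
      ((xbar_tendsto P δ' hσw.le hx0 hc₁ humax h1.1 h2.1 h3.1.1 h4.1.1 hs1.1 hs2.1.1).comp hsub)
    intro i
    calc xbar P δ' (i - 1) ≤ |xbar P δ' (i - 1)| := le_abs_self _
      _ = Real.sqrt ((xbar P δ' (i - 1)) ^ 2) := (Real.sqrt_sq_eq_abs _).symm
      _ ≤ s i := Real.sqrt_le_sqrt (by nlinarith [sq_nonneg P.umax])
  set ε₀ : ℝ := ε / (4 * (k + 1)) with hε₀def
  have hε₀ : 0 < ε₀ := by positivity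
  have hε2 : 0 < ε / 2 := by positivity
  have hxb := xbar_le_exp P δ' hδ' hσw hx0 hc₁ humax h1 h2 h3 h4 hs1 hs2 hε₀
  have hxb' := hsub.eventually hxb
  have hAPB := hstend.eventually hc
  set D : ℝ := c ^ 2 * (1 + P.umax) ^ (2 * k) with hD
  have hDexp := (exp_seq_tendsto hε2).eventually_ge_atTop D
  filter_upwards [hAPB, hxb', hDexp] with i hb hx hDe
  have hx1 : 0 ≤ xbar P δ' (i - 1) := hxnn _
  have hEi1 : (1:ℝ) ≤ exp (ε₀ * i) := one_le_exp (by positivity)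
  have hsle : s i ≤ (1 + P.umax) * exp (ε₀ * i) := by
    have e1 : s i ≤ xbar P δ' (i - 1) + P.umax := by
      rw [hs]
      calc Real.sqrt ((xbar P δ' (i - 1)) ^ 2 + P.umax ^ 2)
          ≤ Real.sqrt ((xbar P δ' (i - 1) + P.umax) ^ 2) := Real.sqrt_le_sqrt (by nlinarith)
        _ = xbar P δ' (i - 1) + P.umax := Real.sqrt_sq (by linarith)
    have e2 : exp (ε₀ * ((i:ℕ) - 1 : ℕ)) ≤ exp (ε₀ * i) := by
      apply exp_le_exp.mpr
      have hcast : (((i - 1 : ℕ)) : ℝ) ≤ (i : ℝ) := by exact_mod_cast Nat.sub_le i 1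
      exact mul_le_mul_of_nonneg_left hcast hε₀.le
    nlinarith [hx, e1, e2, humax]
  have habs : |zbar P δ' i| ≤ c * (s i) ^ k := by
    rw [Real.norm_eq_abs, Real.norm_eq_abs, abs_of_nonneg (pow_nonneg (hsnn i) k)] at hb
    exact hb
  have hz2 : (zbar P δ' i) ^ 2 ≤ (c * (s i) ^ k) ^ 2 := by
    rw [← sq_abs]
    exact pow_le_pow_left₀ (abs_nonneg _) habs 2
  have hsk : (s i) ^ k ≤ ((1 + P.umax) * exp (ε₀ * i)) ^ k := pow_le_pow_left₀ (hsnn i) hsle k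
  have hskn : 0 ≤ (s i) ^ k := pow_nonneg (hsnn i) k
  have hEexp : exp (ε₀ * i) ^ (2 * k) ≤ exp (ε / 2 * i) := by
    rw [← Real.exp_nat_mul]
    apply exp_le_exp.mpr
    have hkn : (0:ℝ) ≤ (k:ℝ) := Nat.cast_nonneg k
    have hin : (0:ℝ) ≤ (i:ℝ) := Nat.cast_nonneg i
    have hmain : ((2 * k : ℕ) : ℝ) * ε₀ ≤ ε / 2 := by
      rw [hε₀def]
      push_cast
      rw [show 2 * (k:ℝ) * (ε / (4 * ((k:ℝ) + 1))) = 2 * (k:ℝ) * ε / (4 * ((k:ℝ) + 1)) from by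
        ring]
      rw [div_le_div_iff₀ (by positivity) (by norm_num : (0:ℝ) < 2)]
      nlinarith
    calc ((2 * k : ℕ) : ℝ) * (ε₀ * i) = (((2 * k : ℕ) : ℝ) * ε₀) * i := by ring
      _ ≤ ε / 2 * i := mul_le_mul_of_nonneg_right hmain hin
  calc (zbar P δ' i) ^ 2 ≤ (c * (s i) ^ k) ^ 2 := hz2
    _ = c ^ 2 * ((s i) ^ k) ^ 2 := by ring
    _ ≤ c ^ 2 * (((1 + P.umax) * exp (ε₀ * i)) ^ k) ^ 2 := by
        apply mul_le_mul_of_nonneg_left _ (sq_nonneg c)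
        exact pow_le_pow_left₀ hskn hsk 2
    _ = D * exp (ε₀ * i) ^ (2 * k) := by
        rw [hD, ← pow_mul, mul_pow, Nat.mul_comm k 2]
        ring
    _ ≤ exp (ε / 2 * i) * exp (ε / 2 * i) := by
        apply mul_le_mul hDe hEexp (by positivity) (exp_pos _).le
    _ = exp (ε * i) := by rw [← Real.exp_add]; congr 1; ring

private lemma betaMax_le (P : BParams) (δ' : ℝ) (hδ' : 0 < δ') (hσw : 0 < P.σw) (hγ : 0 < P.γ)
    (hx0 : 0 ≤ P.x0n) (hc₁ : 0 ≤ P.c₁) (humax : 0 ≤ P.umax)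
    (h1 : IsKInfty P.χ₁ ∧ IsSE 1 P.χ₁) (h2 : IsKInfty P.χ₂)
    (h3 : IsKInfty P.χ₃ ∧ IsSE 1 P.χ₃) (h4 : IsKInfty P.χ₄ ∧ IsSE 2 P.χ₄)
    (hs1 : IsKInfty P.σ₁) (hs2 : IsKInfty P.σ₂ ∧ IsSE 1 P.σ₂) (h5 : IsAPB P.χ₅)
    {ε : ℝ} (hε : 0 < ε) :
    ∀ᶠ t : ℕ in atTop, betaMax P δ' t ≤ P.γ * exp (ε * t) := by
  have hε2 : 0 < ε / 2 := by positivity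
  have hz := zbar_sq_le P δ' hδ' hσw hx0 hc₁ humax h1 h2 h3 h4 hs1 hs2 h5 hε2
  rw [eventually_atTop] at hz
  obtain ⟨N, hN⟩ := hz
  set C : ℝ := ∑ i ∈ Finset.Icc 1 N, (zbar P δ' i) ^ 2 with hCdef
  have hC : 0 ≤ C := Finset.sum_nonneg fun i _ => sq_nonneg _
  have hpt : ∀ t : ℕ, ∀ i ∈ Finset.Icc 1 t, (zbar P δ' i) ^ 2 ≤ C + exp (ε / 2 * t) := by
    intro t i hi
    rw [Finset.mem_Icc] at hi
    by_cases hiN : N ≤ i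
    · have hzi := hN i hiN
      have hiR : (i:ℝ) ≤ (t:ℝ) := by exact_mod_cast hi.2
      have : exp (ε / 2 * i) ≤ exp (ε / 2 * t) :=
        exp_le_exp.mpr (mul_le_mul_of_nonneg_left hiR hε2.le)
      linarith
    · push_neg at hiN
      have hmem : i ∈ Finset.Icc 1 N := Finset.mem_Icc.mpr ⟨hi.1, hiN.le⟩
      have hle := Finset.single_le_sum (f := fun j => (zbar P δ' j) ^ 2)
        (fun j _ => sq_nonneg _) hmem
      have hle' : (zbar P δ' i) ^ 2 ≤ C := hle
      have := (exp_pos (ε / 2 * t)).le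
      linarith
  have hsum : ∀ t : ℕ, (∑ i ∈ Finset.Icc 1 t, (zbar P δ' i) ^ 2)
      ≤ t * (C + exp (ε / 2 * t)) := by
    intro t
    calc (∑ i ∈ Finset.Icc 1 t, (zbar P δ' i) ^ 2)
        ≤ ∑ _i ∈ Finset.Icc 1 t, (C + exp (ε / 2 * t)) := Finset.sum_le_sum (hpt t)
      _ = t * (C + exp (ε / 2 * t)) := by
          rw [Finset.sum_const, Nat.card_Icc]
          simp [nsmul_eq_mul]
          ring
  have hd1 : Tendsto (fun x : ℝ => exp x / x) atTop atTop := by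
    simpa using Real.tendsto_exp_div_pow_atTop 1
  have hd2 : Tendsto (fun x : ℝ => (P.γ * (ε / 2)) * (exp x / x)) atTop atTop :=
    hd1.const_mul_atTop (by positivity)
  have hd3 : Tendsto (fun t : ℕ => (ε / 2) * t) atTop atTop :=
    tendsto_natCast_atTop_atTop.const_mul_atTop hε2
  have hdom : Tendsto (fun t : ℕ => P.γ * exp (ε / 2 * t) / t) atTop atTop := by
    apply (hd2.comp hd3).congr'
    filter_upwards [eventually_ge_atTop 1] with t ht
    have ht0 : (0:ℝ) < (t:ℝ) := by exact_mod_cast Nat.lt_of_lt_of_le Nat.zero_lt_one ht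
    show P.γ * (ε / 2) * (exp (ε / 2 * t) / (ε / 2 * t)) = P.γ * exp (ε / 2 * t) / t
    field_simp
  filter_upwards [hdom.eventually_ge_atTop (C + 1 + P.γ), eventually_ge_atTop 1] with t ht ht1
  have htR : (1:ℝ) ≤ (t:ℝ) := by exact_mod_cast ht1
  have ht0 : (0:ℝ) < (t:ℝ) := by linarith
  have hE1 : (1:ℝ) ≤ exp (ε / 2 * t) := one_le_exp (by positivity)
  have hγE : (C + 1 + P.γ) * t ≤ P.γ * exp (ε / 2 * t) := by
    rw [le_div_iff₀ ht0] at ht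
    linarith
  have hEE : exp (ε * t) = exp (ε / 2 * t) * exp (ε / 2 * t) := by
    rw [← Real.exp_add]; congr 1; ring
  unfold betaMax
  rw [hEE]
  have h1t := hsum t
  nlinarith [mul_le_mul_of_nonneg_right hγE ((exp_pos (ε / 2 * t)).le),
    mul_nonneg (mul_nonneg hC ht0.le) (by linarith : (0:ℝ) ≤ exp (ε / 2 * t) - 1),
    mul_nonneg hγ.le (by nlinarith : (0:ℝ) ≤ (t:ℝ) * exp (ε / 2 * t) - 1)]

private noncomputable def denom (P : BParams) (t : ℕ) : ℝ :=
  P.cPE * P.pPE * ((t:ℝ) - 1) / 4 + P.γ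

private noncomputable def LL (P : BParams) (δ' : ℝ) (t : ℕ) : ℝ :=
  Real.log (betaMax P δ' t / P.γ)

private lemma eBound_eq (P : BParams) (δ : ℝ) (t : ℕ) :
    eBound P δ t = (Real.sqrt (denom P t))⁻¹ *
      (Real.sqrt P.γ * P.θF + P.σw * Real.sqrt (2 * P.n * (Real.log (3 * P.n / δ) +
        ((P.d : ℝ) / 2) * LL P (δ / 3) t))) := rfl

private lemma main_aux (P : BParams) (δ : ℝ) (hδ : 0 < δ)
    (hσw : 0 < P.σw) (hγ : 0 < P.γ) (hcPE : 0 < P.cPE) (hpPE : 0 < P.pPE)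
    (humax : 0 ≤ P.umax) (hc₁ : 0 ≤ P.c₁) (hx0 : 0 ≤ P.x0n) (hθ : 0 ≤ P.θF)
    (h1 : IsKInfty P.χ₁ ∧ IsSE 1 P.χ₁) (h2 : IsKInfty P.χ₂)
    (h3 : IsKInfty P.χ₃ ∧ IsSE 1 P.χ₃) (h4 : IsKInfty P.χ₄ ∧ IsSE 2 P.χ₄)
    (hs1 : IsKInfty P.σ₁) (hs2 : IsKInfty P.σ₂ ∧ IsSE 1 P.σ₂) (h5 : IsAPB P.χ₅) :
    Tendsto (fun t : ℕ => eBound P δ t) atTop (nhds 0) := by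
  have hδ' : 0 < δ / 3 := by positivity
  have hLnn : ∀ t, 0 ≤ LL P (δ / 3) t := by
    intro t
    apply Real.log_nonneg
    rw [le_div_iff₀ hγ, one_mul]
    unfold betaMax
    have : (0:ℝ) ≤ ∑ i ∈ Finset.Icc 1 t, (zbar P (δ / 3) i) ^ 2 :=
      Finset.sum_nonneg fun i _ => sq_nonneg _
    linarith
  have hLsmall : ∀ ε : ℝ, 0 < ε → ∀ᶠ t : ℕ in atTop, LL P (δ / 3) t ≤ ε * t := by
    intro ε hε
    filter_upwards [betaMax_le P (δ / 3) hδ' hσw hγ hx0 hc₁ humax h1 h2 h3 h4 hs1 hs2 h5 hε]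
      with t ht
    unfold LL
    have hbpos : 0 < betaMax P (δ / 3) t / P.γ := by
      apply div_pos _ hγ
      unfold betaMax
      have : (0:ℝ) ≤ ∑ i ∈ Finset.Icc 1 t, (zbar P (δ / 3) i) ^ 2 :=
        Finset.sum_nonneg fun i _ => sq_nonneg _
      linarith
    rw [Real.log_le_iff_le_exp hbpos, div_le_iff₀ hγ]
    linarith
  have hdenT : Tendsto (fun t : ℕ => denom P t) atTop atTop := by
    unfold denom
    apply tendsto_atTop_add_const_right
    have hb : Tendsto (fun t : ℕ => (t:ℝ) - 1) atTop atTop := by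
      simpa [sub_eq_add_neg] using tendsto_atTop_add_const_right atTop (-1 : ℝ) tendsto_natCast_atTop_atTop
    have h' := hb.const_mul_atTop (show (0:ℝ) < P.cPE * P.pPE / 4 by positivity)
    apply h'.congr
    intro t
    ring
  have hdenlb : ∀ᶠ t : ℕ in atTop, P.cPE * P.pPE / 8 * t ≤ denom P t ∧ 0 < denom P t := by
    filter_upwards [eventually_ge_atTop 2] with t ht
    have htR : (2:ℝ) ≤ (t:ℝ) := by exact_mod_cast ht
    constructor
    · unfold denom
      nlinarith [mul_nonneg (mul_pos hcPE hpPE).le (by linarith : (0:ℝ) ≤ (t:ℝ) - 2)]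
    · unfold denom
      nlinarith [mul_pos (mul_pos hcPE hpPE) (by linarith : (0:ℝ) < (t:ℝ) - 1)]
  have hLden : Tendsto (fun t => LL P (δ / 3) t / denom P t) atTop (nhds 0) := by
    rw [NormedAddCommGroup.tendsto_nhds_zero]
    intro ε hε
    have hc8 : 0 < P.cPE * P.pPE / 8 := by positivity
    filter_upwards [hLsmall (ε / 2 * (P.cPE * P.pPE / 8)) (by positivity), hdenlb,
      eventually_ge_atTop 1] with t hL hd ht1
    obtain ⟨hd1, hd2⟩ := hd
    rw [Real.norm_eq_abs, abs_of_nonneg (div_nonneg (hLnn t) hd2.le)]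
    rw [div_lt_iff₀ hd2]
    have htR : (1:ℝ) ≤ (t:ℝ) := by exact_mod_cast ht1
    nlinarith
  have hDT : Tendsto (fun t : ℕ => Real.sqrt (denom P t)) atTop atTop :=
    sqrt_tendsto_atTop.comp hdenT
  have hinv : Tendsto (fun t : ℕ => (Real.sqrt (denom P t))⁻¹) atTop (nhds 0) :=
    hDT.inv_tendsto_atTop
  set K₁ : ℝ := Real.log (3 * P.n / δ) with hK₁
  set Q : ℕ → ℝ := fun t => (2 * P.n * (|K₁| + ((P.d : ℝ) / 2) * LL P (δ / 3) t)) / denom P t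
    with hQdef
  have hQnn : ∀ᶠ t : ℕ in atTop, 0 ≤ Q t := by
    filter_upwards [hdenlb] with t hd
    apply div_nonneg _ hd.2.le
    have := hLnn t
    positivity
  have hQ0 : Tendsto Q atTop (nhds 0) := by
    have hq1 : Tendsto (fun t : ℕ => (2 * P.n * |K₁|) / denom P t) atTop (nhds 0) :=
      Tendsto.div_atTop tendsto_const_nhds hdenT
    have hq2 : Tendsto (fun t : ℕ => ((P.n : ℝ) * P.d) * (LL P (δ / 3) t / denom P t))
        atTop (nhds 0) := by
      simpa using hLden.const_mul ((P.n : ℝ) * P.d)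
    have hadd := hq1.add hq2
    rw [add_zero] at hadd
    apply hadd.congr
    intro t
    show 2 * P.n * |K₁| / denom P t + (P.n : ℝ) * P.d * (LL P (δ / 3) t / denom P t)
      = Q t
    rw [hQdef]
    rw [← mul_div_assoc, ← add_div]
    congr 1
    ring
  have hsqQ : Tendsto (fun t => Real.sqrt (Q t)) atTop (nhds 0) := by
    have := (Real.continuous_sqrt.tendsto 0).comp hQ0
    simpa [Function.comp_def] using this
  have hU0 : Tendsto (fun t : ℕ => (Real.sqrt (denom P t))⁻¹ * (Real.sqrt P.γ * P.θF)
      + P.σw * Real.sqrt (Q t)) atTop (nhds 0) := by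
    have := (hinv.mul_const (Real.sqrt P.γ * P.θF)).add (hsqQ.const_mul P.σw)
    simpa using this
  apply squeeze_zero' ?_ ?_ hU0
  · filter_upwards with t
    rw [eBound_eq]
    have hq : 0 ≤ (Real.sqrt (denom P t))⁻¹ := inv_nonneg.mpr (Real.sqrt_nonneg _)
    apply mul_nonneg hq
    apply add_nonneg (mul_nonneg (Real.sqrt_nonneg _) hθ)
    exact mul_nonneg hσw.le (Real.sqrt_nonneg _)
  · filter_upwards [hdenlb] with t hd
    obtain ⟨_, hd2⟩ := hd
    rw [eBound_eq]
    have hXX' : 2 * (P.n : ℝ) * (K₁ + ((P.d : ℝ) / 2) * LL P (δ / 3) t)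
        ≤ 2 * (P.n : ℝ) * (|K₁| + ((P.d : ℝ) / 2) * LL P (δ / 3) t) := by
      apply mul_le_mul_of_nonneg_left _ (by positivity)
      exact add_le_add_left (le_abs_self _) _
    have hX'nn : 0 ≤ 2 * (P.n : ℝ) * (|K₁| + ((P.d : ℝ) / 2) * LL P (δ / 3) t) := by
      have := hLnn t
      positivity
    have hsden : 0 < Real.sqrt (denom P t) := Real.sqrt_pos.mpr hd2
    rw [mul_add]
    apply add_le_add_right
    have hrw : Real.sqrt (Q t) =
        Real.sqrt (2 * (P.n : ℝ) * (|K₁| + ((P.d : ℝ) / 2) * LL P (δ / 3) t))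
          / Real.sqrt (denom P t) := by
      rw [hQdef]
      exact Real.sqrt_div hX'nn _
    rw [hrw]
    rw [show (Real.sqrt (denom P t))⁻¹ * (P.σw * Real.sqrt (2 * (P.n:ℝ) * (K₁ + ((P.d : ℝ) / 2) * LL P (δ / 3) t)))
      = P.σw * (Real.sqrt (2 * (P.n:ℝ) * (K₁ + ((P.d : ℝ) / 2) * LL P (δ / 3) t)) / Real.sqrt (denom P t)) from by
        rw [div_eq_mul_inv]; ring]
    apply mul_le_mul_of_nonneg_left _ hσw.le
    gcongr

end AuxZero

theorem estimation_error_bound_tends_to_zero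
    (nn dd : ℕ) (σw γ cPE pPE : ℝ) (hσw : 0 < σw) (hγ : 0 < γ)
    (hcPE : 0 < cPE) (hpPE : 0 < pPE)
    (umax c₁ : ℝ) (humax : 0 ≤ umax) (hc₁ : 0 ≤ c₁)
    (θs : Matrix (Fin dd) (Fin nn) ℝ) (x0 : EuclideanSpace ℝ (Fin nn))
    (χ₁ χ₂ χ₃ χ₄ σ₁ σ₂ χ₅ : ℝ → ℝ)
    (hχ₁ : IsKInfty χ₁ ∧ IsSE 1 χ₁) (hχ₂ : IsKInfty χ₂)
    (hχ₃ : IsKInfty χ₃ ∧ IsSE 1 χ₃) (hχ₄ : IsKInfty χ₄ ∧ IsSE 2 χ₄)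
    (hσ₁ : IsKInfty σ₁) (hσ₂ : IsKInfty σ₂ ∧ IsSE 1 σ₂) (hχ₅ : IsAPB χ₅)
    (δ : ℝ) (hδ : 0 < δ ∧ δ < 1)
    (P : BParams)
    (hP : P = ⟨nn, dd, σw, γ, cPE, pPE, ‖x0‖, frobNorm θs,
      χ₁, χ₂, χ₃, χ₄, σ₁, σ₂, χ₅, umax, c₁⟩) :
    Tendsto (fun t : ℕ => eBound P δ t) atTop (nhds 0) := by
  subst hP
  exact main_aux _ δ hδ.1 hσw hγ hcPE hpPE humax hc₁ (norm_nonneg x0) (Real.sqrt_nonneg _)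
    hχ₁ hχ₂ hχ₃ hχ₄ hσ₁ hσ₂ hχ₅
end
end

section
/- Fix n,d ∈ ℕ, constants σ_w, c_PE, p_PE > 0, u_max ≥ 0, c₁ ≥ 0, x₀ ∈ ℝⁿ, δ ∈ (0,1), functions χ₁,χ₃,σ₂ ∈ 𝒦∞ that are 1-SE, χ₄ ∈ 𝒦∞ that is 2-SE, χ₂,σ₁ ∈ 𝒦∞, and an APB function χ₅ : [0,∞) → [0,∞). Define w̄(t,δ)=σ_w√(2n ln(nπ²t²/(3δ))) for t≥1 and w̄(0,δ)=0; x̄(t,δ,x₀)=χ₁(t)+χ₂(‖x₀‖)+χ₃(tσ₁(u_max))+χ₄(tσ₂(w̄(t,δ)))+c₁; z̄(t,δ,x₀)=χ₅(√(x̄(t−1,δ,x₀)²+u_max²)). Then there exists T ∈ ℕ such that for all t ≥ T: t ≥ (2/((1−ln 2)·p_PE))·( d·ln(1 + 16·Σ_{i=1}^{t} z̄(i,δ/3,x₀)² / (c_PE·p_PE·(t−1))) + ln(π²(t−T+1)²/(2δ)) ) + 1; in other words, the burn-in time T_burn-in(δ,x₀), defined as the infimum over all such T, is finite. -/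
open MeasureTheory ProbabilityTheory Filter
open scoped RealInnerProductSpace

noncomputable section

section BurnInHelpers

open Real

/-- Polynomials eventually grow slower than `exp (c * t)` along `ℕ`. -/
private lemma ev_poly_le_exp (a c : ℝ) (k : ℕ) (hc : 0 < c) :
    ∀ᶠ t : ℕ in atTop, a * (t : ℝ) ^ k ≤ Real.exp (c * t) := by
  have h0 : (fun x : ℝ => x ^ k) =o[atTop] Real.exp := Real.isLittleO_pow_exp_atTop
  have hcomp : Tendsto (fun x : ℝ => c * x) atTop atTop :=
    Tendsto.const_mul_atTop hc tendsto_id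
  have h1 : (fun x : ℝ => (c * x) ^ k) =o[atTop] (fun x => Real.exp (c * x)) :=
    h0.comp_tendsto hcomp
  have h2 : (fun x : ℝ => a * x ^ k) =o[atTop] (fun x => Real.exp (c * x)) := by
    have : (fun x : ℝ => a * x ^ k) = fun x => (a / c ^ k) * (c * x) ^ k := by
      funext x; rw [mul_pow]; field_simp
    rw [this]; exact h1.const_mul_left _
  have h3 := (h2.comp_tendsto (tendsto_natCast_atTop_atTop (R := ℝ))).bound one_pos
  filter_upwards [h3] with t ht
  calc a * (t : ℝ) ^ k ≤ ‖a * (t : ℝ) ^ k‖ := le_abs_self _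
    _ ≤ 1 * ‖Real.exp (c * t)‖ := ht
    _ = Real.exp (c * t) := by rw [one_mul, Real.norm_eq_abs, abs_of_pos (Real.exp_pos _)]

/-- `f` is eventually below every `exp (ε t)`. -/
private def EvSE (f : ℕ → ℝ) : Prop :=
  ∀ ε : ℝ, 0 < ε → ∀ᶠ t : ℕ in atTop, f t ≤ Real.exp (ε * t)

/-- `log (f t)` is eventually below every `ε t`. -/
private def LogSm (f : ℕ → ℝ) : Prop :=
  ∀ ε : ℝ, 0 < ε → ∀ᶠ t : ℕ in atTop, Real.log (f t) ≤ ε * t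

private lemma EvSE.add {f g : ℕ → ℝ} (hf : EvSE f) (hg : EvSE g) :
    EvSE (fun t => f t + g t) := by
  intro ε hε
  filter_upwards [hf (ε/2) (by positivity), hg (ε/2) (by positivity),
    ev_poly_le_exp 2 (ε/2) 0 (by positivity)] with t h1 h2 h3
  have h3' : (2:ℝ) ≤ Real.exp (ε/2 * t) := by simpa using h3
  calc f t + g t ≤ 2 * Real.exp (ε/2 * t) := by linarith
    _ ≤ Real.exp (ε/2*t) * Real.exp (ε/2*t) :=
        mul_le_mul_of_nonneg_right h3' (Real.exp_pos _).le
    _ = Real.exp (ε*t) := by rw [← Real.exp_add]; ring_nf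

private lemma EvSE_const (c : ℝ) : EvSE (fun _ => c) := by
  intro ε hε
  filter_upwards [ev_poly_le_exp c ε 0 hε] with t ht
  simpa using ht

private lemma EvSE_of_logSm {f : ℕ → ℝ} (hf : LogSm f) : EvSE f := by
  intro ε hε
  filter_upwards [hf ε hε] with t ht
  rcases le_or_gt (f t) 1 with h | h
  · exact h.trans (Real.one_le_exp (by positivity))
  · exact (Real.log_le_iff_le_exp (by linarith)).1 ht

private lemma EvSE.congr' {f g : ℕ → ℝ} (hf : EvSE f) (h : ∀ t, g t = f t) : EvSE g := by
  intro ε hε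
  filter_upwards [hf ε hε] with t ht
  rw [h t]; exact ht

private lemma logSm_of_SE1 {χ : ℝ → ℝ} (hse : IsSE 1 χ) (a : ℝ) (ha : 0 < a) :
    LogSm (fun t => χ ((t : ℝ) * a)) := by
  intro ε hε
  have hb := hse.bound (c := ε / a) (by positivity)
  have htend : Tendsto (fun t : ℕ => (t : ℝ) * a) atTop atTop :=
    Tendsto.atTop_mul_const ha tendsto_natCast_atTop_atTop
  filter_upwards [htend.eventually hb, htend.eventually_ge_atTop 0] with t ht ht0
  simp only [pow_one, Real.norm_eq_abs] at ht
  have key : Real.log (χ ((t:ℝ) * a)) ≤ ε / a * ((t:ℝ) * a) := by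
    calc Real.log (χ ((t:ℝ) * a)) ≤ |Real.log (χ ((t:ℝ) * a))| := le_abs_self _
      _ ≤ ε / a * |(t:ℝ) * a| := ht
      _ = ε / a * ((t:ℝ) * a) := by rw [abs_of_nonneg ht0]
  calc Real.log (χ ((t:ℝ) * a)) ≤ ε / a * ((t:ℝ) * a) := key
    _ = ε * t := by field_simp

private lemma logSm_chi4 {χ : ℝ → ℝ} (hK : IsKInfty χ) (hse : IsSE 2 χ) {w : ℕ → ℝ}
    (hw : ∀ᶠ t : ℕ in atTop, 0 ≤ w t ∧ w t ≤ (t : ℝ)) :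
    LogSm (fun t => χ ((t : ℝ) * w t)) := by
  intro ε hε
  have hb := hse.bound (c := ε) hε
  filter_upwards [(tendsto_natCast_atTop_atTop (R := ℝ)).eventually hb, hw] with t ht hwt
  simp only [Real.norm_eq_abs] at ht
  have hargnn : 0 ≤ (t : ℝ) * w t := mul_nonneg (Nat.cast_nonneg t) hwt.1
  have harg : (t : ℝ) * w t ≤ (t : ℝ) ^ 2 := by
    have := mul_le_mul_of_nonneg_left hwt.2 (Nat.cast_nonneg (α := ℝ) t)
    nlinarith
  have hmono : χ ((t : ℝ) * w t) ≤ χ ((t : ℝ) ^ 2) :=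
    hK.1.2.1.monotoneOn (Set.mem_Ici.2 hargnn) (Set.mem_Ici.2 (by positivity)) harg
  have habs : |(t : ℝ)| = (t : ℝ) := abs_of_nonneg (Nat.cast_nonneg t)
  rcases le_or_gt (χ ((t : ℝ) * w t)) 1 with h | h
  · calc Real.log (χ ((t : ℝ) * w t)) ≤ 0 := Real.log_nonpos (hK.1.2.2.2 _ hargnn) h
      _ ≤ ε * t := by positivity
  · calc Real.log (χ ((t : ℝ) * w t)) ≤ Real.log (χ ((t : ℝ) ^ 2)) :=
        Real.log_le_log (by linarith) hmono
      _ ≤ |Real.log (χ ((t : ℝ) ^ 2))| := le_abs_self _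
      _ ≤ ε * |(t : ℝ)| := ht
      _ = ε * t := by rw [habs]

private lemma wbar_le_halflog (σw : ℝ) (hσw : 0 < σw) (n : ℕ) (δ' : ℝ) (hδ' : 0 < δ') :
    ∀ᶠ t : ℕ in atTop,
      σw * Real.sqrt (2 * n * Real.log ((n:ℝ) * Real.pi ^ 2 * (t:ℝ) ^ 2 / (3 * δ')))
        ≤ (1/2) * Real.log t := by
  rcases Nat.eq_zero_or_pos n with hn | hn
  · subst hn
    filter_upwards [eventually_ge_atTop 1] with t ht
    have ht1 : (1:ℝ) ≤ (t:ℝ) := by exact_mod_cast ht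
    simp only [Nat.cast_zero]
    rw [show (2:ℝ) * 0 * Real.log (0 * Real.pi ^ 2 * (t:ℝ) ^ 2 / (3 * δ')) = 0 by ring,
      Real.sqrt_zero, mul_zero]
    have := Real.log_nonneg ht1
    linarith
  · have hn' : (0:ℝ) < n := by exact_mod_cast hn
    set A : ℝ := (n:ℝ) * Real.pi ^ 2 / (3 * δ') with hA
    have hA0 : 0 < A := by
      have := Real.pi_pos
      apply div_pos (by positivity) (by positivity)
    have hlog : Tendsto (fun t : ℕ => Real.log t) atTop atTop :=
      Real.tendsto_log_atTop.comp tendsto_natCast_atTop_atTop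
    filter_upwards [hlog.eventually_ge_atTop (|Real.log A|),
      hlog.eventually_ge_atTop ((2 * σw * Real.sqrt (6 * n)) ^ 2),
      eventually_ge_atTop 1] with t h1 h2 ht
    have ht1 : (1:ℝ) ≤ (t:ℝ) := by exact_mod_cast ht
    set L : ℝ := Real.log t with hLdef
    have hL0 : 0 ≤ L := le_trans (abs_nonneg _) h1
    have hrw : (n:ℝ) * Real.pi ^ 2 * (t:ℝ) ^ 2 / (3 * δ') = A * (t:ℝ) ^ 2 := by
      rw [hA]; ring
    rw [hrw, Real.log_mul (ne_of_gt hA0) (by positivity), Real.log_pow]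
    have hins : 2 * (n:ℝ) * (Real.log A + (2:ℕ) * L) ≤ 6 * n * L := by
      have : Real.log A ≤ L := le_trans (le_abs_self _) h1
      push_cast
      nlinarith
    have hs1 : Real.sqrt (2 * (n:ℝ) * (Real.log A + (2:ℕ) * L)) ≤ Real.sqrt (6 * n * L) :=
      Real.sqrt_le_sqrt hins
    have hs2 : Real.sqrt (6 * (n:ℝ) * L) = Real.sqrt (6 * n) * Real.sqrt L := by
      rw [Real.sqrt_mul (by positivity)]
    have hs3 : 2 * σw * Real.sqrt (6 * n) ≤ Real.sqrt L := by
      have := Real.sqrt_le_sqrt h2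
      rwa [Real.sqrt_sq (by positivity)] at this
    have hss : Real.sqrt L * Real.sqrt L = L := Real.mul_self_sqrt hL0
    have hfin : σw * (Real.sqrt (6 * n) * Real.sqrt L) ≤ (1/2) * L := by
      nlinarith [Real.sqrt_nonneg L, Real.sqrt_nonneg (6 * (n:ℝ))]
    calc σw * Real.sqrt (2 * (n:ℝ) * (Real.log A + (2:ℕ) * L))
        ≤ σw * (Real.sqrt (6 * n) * Real.sqrt L) := by
          rw [← hs2]; exact mul_le_mul_of_nonneg_left (hs2 ▸ hs1) hσw.le
      _ ≤ (1/2) * L := hfin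

private lemma sigma2_wbar_le_s12 {σ₂ : ℝ → ℝ} (hK : IsKInfty σ₂) (hse : IsSE 1 σ₂)
    {W : ℕ → ℝ} (hW0 : ∀ t, 0 ≤ W t)
    (hWlog : ∀ᶠ t : ℕ in atTop, W t ≤ (1/2) * Real.log t) :
    ∀ᶠ t : ℕ in atTop, 0 ≤ σ₂ (W t) ∧ σ₂ (W t) ≤ (t : ℝ) := by
  obtain ⟨R₀, hR₀⟩ := eventually_atTop.1 (hse.bound one_pos)
  set R : ℝ := max R₀ 1 with hRdef
  have hR1 : (1:ℝ) ≤ R := le_max_right _ _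
  filter_upwards [hWlog, eventually_ge_atTop 1,
    (tendsto_natCast_atTop_atTop (R := ℝ)).eventually_ge_atTop (σ₂ R)] with t hWt ht hσR
  have ht1 : (1:ℝ) ≤ (t:ℝ) := by exact_mod_cast ht
  have hlognn : 0 ≤ Real.log t := Real.log_nonneg ht1
  refine ⟨hK.1.2.2.2 _ (hW0 t), ?_⟩
  rcases le_or_gt (W t) R with h | h
  · have h1 : σ₂ (W t) ≤ σ₂ R :=
      hK.1.2.1.monotoneOn (Set.mem_Ici.2 (hW0 t)) (Set.mem_Ici.2 (by linarith)) h
    linarith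
  · have hWpos : 0 < W t := lt_of_lt_of_le (by linarith) (le_of_lt h)
    have hσpos : 0 < σ₂ (W t) := by
      have := hK.1.2.1 (Set.mem_Ici.2 le_rfl) (Set.mem_Ici.2 (hW0 t)) hWpos
      rwa [hK.1.2.2.1] at this
    have hb := hR₀ (W t) (le_trans (le_max_left _ _) h.le)
    simp only [pow_one, Real.norm_eq_abs, one_mul] at hb
    have hlogσ : Real.log (σ₂ (W t)) ≤ W t :=
      le_trans (le_abs_self _) (hb.trans_eq (abs_of_nonneg (hW0 t)))
    have hlt : Real.log (σ₂ (W t)) ≤ Real.log t := by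
      calc Real.log (σ₂ (W t)) ≤ W t := hlogσ
        _ ≤ (1/2) * Real.log t := hWt
        _ ≤ Real.log t := by linarith
    calc σ₂ (W t) ≤ Real.exp (Real.log t) := (Real.log_le_iff_le_exp hσpos).1 hlt
      _ = (t:ℝ) := Real.exp_log (by linarith)

private lemma EvSE_sq_APB {χ₅ : ℝ → ℝ} (hAPB : IsAPB χ₅) {x : ℕ → ℝ} (hx0 : ∀ t, 0 ≤ x t)
    (hxtop : Tendsto x atTop atTop) (hxE : EvSE x) (u : ℝ) (hu : 0 ≤ u) :
    EvSE (fun t => (χ₅ (Real.sqrt (x (t - 1) ^ 2 + u ^ 2))) ^ 2) := by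
  obtain ⟨k, hO⟩ := hAPB
  obtain ⟨C, hC⟩ := hO.bound
  obtain ⟨R, hR⟩ := eventually_atTop.1 hC
  intro ε hε
  have hε₁ : (0:ℝ) < ε / (4 * k + 4) := by positivity
  set ε₁ : ℝ := ε / (4 * k + 4) with hε₁def
  obtain ⟨t₀, ht₀⟩ := eventually_atTop.1 (hxE ε₁ hε₁)
  obtain ⟨t₁, ht₁⟩ := eventually_atTop.1 (hxtop.eventually_ge_atTop R)
  have hconst : ∀ᶠ t : ℕ in atTop, C ^ 2 * 4 ^ k ≤ Real.exp (ε / 2 * t) := by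
    filter_upwards [ev_poly_le_exp (C ^ 2 * 4 ^ k) (ε / 2) 0 (by positivity)] with t ht
    simpa using ht
  have huexp : ∀ᶠ t : ℕ in atTop, u ≤ Real.exp (ε₁ * t) := by
    filter_upwards [ev_poly_le_exp u ε₁ 0 hε₁] with t ht
    simpa using ht
  filter_upwards [eventually_ge_atTop (t₀ + 1), eventually_ge_atTop (t₁ + 1),
    hconst, huexp] with t hta htb hcn hue
  have h1 : t - 1 ≥ t₀ := by omega
  have h2 : t - 1 ≥ t₁ := by omega
  set y : ℝ := Real.sqrt (x (t - 1) ^ 2 + u ^ 2) with hy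
  have hynn : 0 ≤ y := Real.sqrt_nonneg _
  have hyR : R ≤ y := by
    calc R ≤ x (t - 1) := ht₁ _ h2
      _ = Real.sqrt (x (t - 1) ^ 2) := (Real.sqrt_sq (hx0 _)).symm
      _ ≤ y := Real.sqrt_le_sqrt (by nlinarith)
  have hyle : y ≤ x (t - 1) + u := by
    rw [hy]
    calc Real.sqrt (x (t-1) ^ 2 + u ^ 2) ≤ Real.sqrt ((x (t-1) + u) ^ 2) :=
        Real.sqrt_le_sqrt (by nlinarith [hx0 (t-1)])
      _ = x (t-1) + u := Real.sqrt_sq (by have := hx0 (t-1); linarith)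
  have hxle : x (t - 1) ≤ Real.exp (ε₁ * t) := by
    calc x (t - 1) ≤ Real.exp (ε₁ * (t - 1 : ℕ)) := ht₀ _ h1
      _ ≤ Real.exp (ε₁ * t) := by
          apply Real.exp_le_exp.2
          have : ((t - 1 : ℕ) : ℝ) ≤ (t : ℝ) := by exact_mod_cast Nat.sub_le t 1
          nlinarith
  have hy2 : y ≤ 2 * Real.exp (ε₁ * t) := by linarith
  have hb := hR y hyR
  simp only [Real.norm_eq_abs] at hb
  have hb' : |χ₅ y| ≤ C * y ^ k := by
    calc |χ₅ y| ≤ C * |y ^ k| := hb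
      _ = C * y ^ k := by rw [abs_of_nonneg (by positivity)]
  have hsq : (χ₅ y) ^ 2 ≤ C ^ 2 * y ^ (2 * k) := by
    have hms := mul_self_le_mul_self (abs_nonneg (χ₅ y)) hb'
    calc (χ₅ y) ^ 2 = |χ₅ y| * |χ₅ y| := by rw [abs_mul_abs_self]; ring
      _ ≤ (C * y ^ k) * (C * y ^ k) := hms
      _ = C ^ 2 * y ^ (2 * k) := by rw [pow_mul]; ring
  have hypow : y ^ (2 * k) ≤ (2 * Real.exp (ε₁ * t)) ^ (2 * k) :=
    pow_le_pow_left₀ hynn hy2 _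
  have hexp_pow : (2 * Real.exp (ε₁ * t)) ^ (2 * k)
      = 4 ^ k * Real.exp ((2 * k * ε₁) * t) := by
    have e1 : (2:ℝ) ^ (2 * k) = 4 ^ k := by rw [pow_mul]; norm_num
    have e2 : Real.exp (ε₁ * t) ^ (2 * k) = Real.exp ((2 * k * ε₁) * t) := by
      rw [← Real.exp_nat_mul]
      congr 1
      push_cast
      ring
    rw [mul_pow, e1, e2]
  have hexp_le : Real.exp ((2 * k * ε₁) * t) ≤ Real.exp (ε / 2 * t) := by
    apply Real.exp_le_exp.2
    apply mul_le_mul_of_nonneg_right _ (Nat.cast_nonneg t)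
    have h4 : (0:ℝ) < 4 * (k:ℝ) + 4 := by positivity
    rw [hε₁def, ← mul_div_assoc, div_le_div_iff₀ h4 two_pos]
    nlinarith [Nat.cast_nonneg (α := ℝ) k]
  calc (χ₅ y) ^ 2 ≤ C ^ 2 * y ^ (2 * k) := hsq
    _ ≤ C ^ 2 * (4 ^ k * Real.exp ((2 * k * ε₁) * t)) := by
        rw [← hexp_pow]
        exact mul_le_mul_of_nonneg_left hypow (sq_nonneg C)
    _ = (C ^ 2 * 4 ^ k) * Real.exp ((2 * k * ε₁) * t) := by ring
    _ ≤ Real.exp (ε / 2 * t) * Real.exp (ε / 2 * t) :=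
        mul_le_mul hcn hexp_le (Real.exp_pos _).le (Real.exp_pos _).le
    _ = Real.exp (ε * t) := by rw [← Real.exp_add]; ring_nf

private lemma EvSE_sum {f : ℕ → ℝ} (hfnn : ∀ t, 0 ≤ f t) (hf : EvSE f) :
    EvSE (fun t => ∑ i ∈ Finset.Icc 1 t, f i) := by
  intro ε hε
  obtain ⟨t₀, h₀⟩ := eventually_atTop.1 (hf (ε / 2) (by positivity))
  set M : ℝ := ∑ i ∈ Finset.Icc 1 t₀, f i with hM
  have hMnn : 0 ≤ M := Finset.sum_nonneg fun i _ => hfnn i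
  filter_upwards [ev_poly_le_exp (2 * M) ε 1 hε, ev_poly_le_exp 2 (ε / 2) 1 (by positivity),
    eventually_ge_atTop t₀] with t h1 h2 ht
  simp only [pow_one] at h1 h2
  have hterm : ∀ i ∈ Finset.Icc 1 t, f i ≤ M + Real.exp (ε / 2 * t) := by
    intro i hi
    rw [Finset.mem_Icc] at hi
    rcases le_or_gt i t₀ with hc | hc
    · have : f i ≤ M :=
        Finset.single_le_sum (fun j _ => hfnn j) (Finset.mem_Icc.2 ⟨hi.1, hc⟩)
      linarith [Real.exp_pos (ε / 2 * (t:ℝ))]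
    · have hfi : f i ≤ Real.exp (ε / 2 * i) := h₀ i hc.le
      have h3 : Real.exp (ε / 2 * i) ≤ Real.exp (ε / 2 * t) := by
        apply Real.exp_le_exp.2
        have : (i:ℝ) ≤ t := by exact_mod_cast hi.2
        nlinarith
      linarith
  have hsum : (∑ i ∈ Finset.Icc 1 t, f i) ≤ (t:ℝ) * (M + Real.exp (ε / 2 * t)) := by
    have := Finset.sum_le_card_nsmul _ _ _ hterm
    rwa [Nat.card_Icc, Nat.add_sub_cancel, nsmul_eq_mul] at this
  have hexp : Real.exp (ε / 2 * t) * Real.exp (ε / 2 * t) = Real.exp (ε * t) := by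
    rw [← Real.exp_add]; ring_nf
  have hpos := Real.exp_pos (ε / 2 * (t:ℝ))
  have h2' : (t:ℝ) * Real.exp (ε / 2 * t) ≤ Real.exp (ε * t) / 2 := by
    nlinarith
  nlinarith

end BurnInHelpers

theorem burn_in_time_is_finite
    (nn dd : ℕ) (σw cPE pPE : ℝ) (hσw : 0 < σw) (hcPE : 0 < cPE) (hpPE : 0 < pPE)
    (umax c₁ : ℝ) (humax : 0 ≤ umax) (hc₁ : 0 ≤ c₁)
    (x0 : EuclideanSpace ℝ (Fin nn))
    (χ₁ χ₂ χ₃ χ₄ σ₁ σ₂ χ₅ : ℝ → ℝ)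
    (hχ₁ : IsKInfty χ₁ ∧ IsSE 1 χ₁) (hχ₂ : IsKInfty χ₂)
    (hχ₃ : IsKInfty χ₃ ∧ IsSE 1 χ₃) (hχ₄ : IsKInfty χ₄ ∧ IsSE 2 χ₄)
    (hσ₁ : IsKInfty σ₁) (hσ₂ : IsKInfty σ₂ ∧ IsSE 1 σ₂) (hχ₅ : IsAPB χ₅)
    (δ : ℝ) (hδ : 0 < δ ∧ δ < 1)
    (P : BParams)
    (hP : P = ⟨nn, dd, σw, 0, cPE, pPE, ‖x0‖, 0,
      χ₁, χ₂, χ₃, χ₄, σ₁, σ₂, χ₅, umax, c₁⟩) :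
    (∃ T : ℕ, ∀ t : ℕ, T ≤ t →
      (2 / ((1 - Real.log 2) * pPE)) *
          ((dd : ℝ) * Real.log (1 + 16 * (∑ i ∈ Finset.Icc 1 t, (zbar P (δ / 3) i) ^ 2) /
              (cPE * pPE * ((t : ℝ) - 1))) +
            Real.log (Real.pi ^ 2 * ((t : ℝ) - (T : ℝ) + 1) ^ 2 / (2 * δ))) + 1 ≤ (t : ℝ)) ∧
    Tburnin P δ < ⊤ := by
  obtain ⟨hδ0, hδ1⟩ := hδ
  subst hP
  set Q : BParams := ⟨nn, dd, σw, 0, cPE, pPE, ‖x0‖, 0,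
    χ₁, χ₂, χ₃, χ₄, σ₁, σ₂, χ₅, umax, c₁⟩ with hQ
  set δ' : ℝ := δ / 3 with hδ'
  have hδ'pos : 0 < δ' := by rw [hδ']; linarith
  -- nonnegativity of wbar
  have hWnn : ∀ t : ℕ, 0 ≤ wbar Q δ' t := by
    intro t
    simp only [wbar]
    split
    · exact le_rfl
    · exact mul_nonneg hσw.le (Real.sqrt_nonneg _)
  -- wbar grows at most like (1/2) log t
  have hWlog : ∀ᶠ t : ℕ in atTop, wbar Q δ' t ≤ (1/2) * Real.log t := by
    filter_upwards [wbar_le_halflog σw hσw nn δ' hδ'pos, eventually_ge_atTop 1] with t h ht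
    have h0 : t ≠ 0 := by omega
    simp only [wbar, if_neg h0]
    exact h
  have hσ₂W := sigma2_wbar_le_s12 hσ₂.1 hσ₂.2 hWnn hWlog
  -- EvSE for the five summands of xbar
  have E1 : EvSE (fun t : ℕ => χ₁ (t : ℝ)) :=
    (EvSE_of_logSm (logSm_of_SE1 hχ₁.2 1 one_pos)).congr' (fun t => by rw [mul_one])
  have E2 : EvSE (fun _ : ℕ => χ₂ ‖x0‖) := EvSE_const _
  have E3 : EvSE (fun t : ℕ => χ₃ ((t : ℝ) * σ₁ umax)) := by
    rcases eq_or_lt_of_le (hσ₁.1.2.2.2 umax humax) with h | h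
    · refine (EvSE_const 0).congr' (fun t => ?_)
      rw [← h, mul_zero, hχ₃.1.1.2.2.1]
    · exact EvSE_of_logSm (logSm_of_SE1 hχ₃.2 _ h)
  have E4 : EvSE (fun t : ℕ => χ₄ ((t : ℝ) * σ₂ (wbar Q δ' t))) :=
    EvSE_of_logSm (logSm_chi4 hχ₄.1 hχ₄.2 hσ₂W)
  have E5 : EvSE (fun _ : ℕ => c₁) := EvSE_const _
  have hxE : EvSE (fun t => xbar Q δ' t) :=
    ((((E1.add E2).add E3).add E4).add E5).congr' (fun t => rfl)
  -- xbar is nonnegative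
  have hxnn : ∀ t, 0 ≤ xbar Q δ' t := by
    intro t
    have h1 : 0 ≤ χ₁ (t : ℝ) := hχ₁.1.1.2.2.2 _ (Nat.cast_nonneg t)
    have h2 : 0 ≤ χ₂ ‖x0‖ := hχ₂.1.2.2.2 _ (norm_nonneg x0)
    have h3 : 0 ≤ χ₃ ((t : ℝ) * σ₁ umax) :=
      hχ₃.1.1.2.2.2 _ (mul_nonneg (Nat.cast_nonneg t) (hσ₁.1.2.2.2 _ humax))
    have h4 : 0 ≤ χ₄ ((t : ℝ) * σ₂ (wbar Q δ' t)) :=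
      hχ₄.1.1.2.2.2 _ (mul_nonneg (Nat.cast_nonneg t) (hσ₂.1.1.2.2.2 _ (hWnn t)))
    show (0:ℝ) ≤ χ₁ (t : ℝ) + χ₂ ‖x0‖ + χ₃ ((t : ℝ) * σ₁ umax) +
      χ₄ ((t : ℝ) * σ₂ (wbar Q δ' t)) + c₁
    linarith
  -- xbar tends to infinity
  have hxtop : Tendsto (fun t : ℕ => xbar Q δ' t) atTop atTop := by
    apply tendsto_atTop_mono _ (hχ₁.1.2.comp (tendsto_natCast_atTop_atTop (R := ℝ)))
    intro t
    have h2 : 0 ≤ χ₂ ‖x0‖ := hχ₂.1.2.2.2 _ (norm_nonneg x0)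
    have h3 : 0 ≤ χ₃ ((t : ℝ) * σ₁ umax) :=
      hχ₃.1.1.2.2.2 _ (mul_nonneg (Nat.cast_nonneg t) (hσ₁.1.2.2.2 _ humax))
    have h4 : 0 ≤ χ₄ ((t : ℝ) * σ₂ (wbar Q δ' t)) :=
      hχ₄.1.1.2.2.2 _ (mul_nonneg (Nat.cast_nonneg t) (hσ₂.1.1.2.2.2 _ (hWnn t)))
    show χ₁ (t : ℝ) ≤ χ₁ (t : ℝ) + χ₂ ‖x0‖ + χ₃ ((t : ℝ) * σ₁ umax) +
      χ₄ ((t : ℝ) * σ₂ (wbar Q δ' t)) + c₁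
    linarith
  -- zbar squared is sub-exponential
  have hzE : EvSE (fun t => zbar Q δ' t ^ 2) :=
    (EvSE_sq_APB hχ₅ hxnn hxtop hxE umax humax).congr' (fun t => rfl)
  have hS : EvSE (fun t => ∑ i ∈ Finset.Icc 1 t, zbar Q δ' i ^ 2) :=
    EvSE_sum (fun t => sq_nonneg _) hzE
  have hcp : (0:ℝ) < cPE * pPE := mul_pos hcPE hpPE
  -- bound on the first log-term
  have hA : ∀ ε : ℝ, 0 < ε → ∀ᶠ t : ℕ in atTop,
      Real.log (1 + 16 * (∑ i ∈ Finset.Icc 1 t, zbar Q δ' i ^ 2) /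
        (cPE * pPE * ((t:ℝ) - 1))) ≤ ε * t := by
    intro ε hε
    filter_upwards [hS (ε/2) (by positivity),
      ev_poly_le_exp (2 + 32 / (cPE * pPE)) (ε/2) 0 (by positivity),
      eventually_ge_atTop 2] with t h1 h2 ht
    have ht2 : (2:ℝ) ≤ (t:ℝ) := by exact_mod_cast ht
    set S : ℝ := ∑ i ∈ Finset.Icc 1 t, zbar Q δ' i ^ 2 with hSdef
    have hSnn : 0 ≤ S := Finset.sum_nonneg fun i _ => sq_nonneg _
    have hden : 0 < cPE * pPE * ((t:ℝ) - 1) := by nlinarith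
    set E : ℝ := Real.exp (ε/2 * t) with hEdef
    have hE1 : (1:ℝ) ≤ E := Real.one_le_exp (by positivity)
    have hEc : 2 + 32 / (cPE * pPE) ≤ E := by simpa using h2
    have hfrac : 16 * S / (cPE * pPE * ((t:ℝ) - 1)) ≤ 16 * S / (cPE * pPE) := by
      rw [div_le_div_iff₀ hden hcp]
      nlinarith [mul_nonneg (mul_nonneg hSnn hcp.le) (by linarith : (0:ℝ) ≤ (t:ℝ) - 2)]
    have hSb : 16 * S / (cPE * pPE) ≤ 16 / (cPE * pPE) * E := by
      rw [show 16 * S / (cPE * pPE) = 16 / (cPE * pPE) * S from by ring]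
      exact mul_le_mul_of_nonneg_left h1 (div_nonneg (by norm_num) hcp.le)
    have hargpos : 0 < 1 + 16 * S / (cPE * pPE * ((t:ℝ) - 1)) := by
      have h0 : 0 ≤ 16 * S / (cPE * pPE * ((t:ℝ) - 1)) :=
        div_nonneg (by linarith) hden.le
      linarith
    rw [Real.log_le_iff_le_exp hargpos]
    have hEE : E * E = Real.exp (ε * t) := by rw [hEdef, ← Real.exp_add]; ring_nf
    have hm : (2 + 32 / (cPE * pPE)) * E ≤ E * E :=
      mul_le_mul_of_nonneg_right hEc (by linarith)
    have hu : 0 ≤ 16 / (cPE * pPE) * E :=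
      mul_nonneg (div_nonneg (by norm_num) hcp.le) (by linarith)
    calc 1 + 16 * S / (cPE * pPE * ((t:ℝ) - 1))
        ≤ 1 + 16 / (cPE * pPE) * E := by linarith
      _ ≤ E * E := by
          have hm' : 2 * E + 2 * (16 / (cPE * pPE) * E) ≤ E * E := by
            calc 2 * E + 2 * (16 / (cPE * pPE) * E) = (2 + 32 / (cPE * pPE)) * E := by ring
              _ ≤ E * E := hm
          linarith
      _ = Real.exp (ε * t) := hEE
  -- bound on the second log-term
  have hB : ∀ ε : ℝ, 0 < ε → ∀ᶠ t : ℕ in atTop,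
      Real.log (Real.pi ^ 2 * ((t:ℝ) + 1) ^ 2 / (2 * δ)) ≤ ε * t := by
    intro ε hε
    filter_upwards [ev_poly_le_exp (2 * Real.pi ^ 2 / δ) ε 2 hε,
      eventually_ge_atTop 1] with t h1 ht
    have ht1 : (1:ℝ) ≤ (t:ℝ) := by exact_mod_cast ht
    have hpi := Real.pi_pos
    have hpos : 0 < Real.pi ^ 2 * ((t:ℝ) + 1) ^ 2 / (2 * δ) :=
      div_pos (mul_pos (pow_pos hpi 2) (by positivity)) (by linarith)
    rw [Real.log_le_iff_le_exp hpos]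
    have h4 : ((t:ℝ) + 1) ^ 2 ≤ 4 * (t:ℝ) ^ 2 := by nlinarith
    calc Real.pi ^ 2 * ((t:ℝ) + 1) ^ 2 / (2 * δ)
        ≤ Real.pi ^ 2 * (4 * (t:ℝ) ^ 2) / (2 * δ) := by gcongr
      _ = 2 * Real.pi ^ 2 / δ * (t:ℝ) ^ 2 := by field_simp; ring
      _ ≤ Real.exp (ε * t) := h1
  -- final assembly
  have hlog2 : Real.log 2 < 1 := by
    have := Real.log_two_lt_d9; linarith
  set K : ℝ := 2 / ((1 - Real.log 2) * pPE) with hKdef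
  have hKpos : 0 < K := div_pos two_pos (mul_pos (by linarith) hpPE)
  have hdd1 : (0:ℝ) < (dd:ℝ) + 1 := by positivity
  set ε₀ : ℝ := 1 / (2 * K * ((dd:ℝ) + 1)) with hε₀
  have hε₀pos : 0 < ε₀ :=
    div_pos one_pos (mul_pos (mul_pos two_pos hKpos) hdd1)
  obtain ⟨T, hT⟩ := eventually_atTop.1
    (((hA ε₀ hε₀pos).and ((hB ε₀ hε₀pos).and (eventually_ge_atTop 2))))
  have main : ∀ t : ℕ, T ≤ t →
      (2 / ((1 - Real.log 2) * pPE)) *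
          ((dd : ℝ) * Real.log (1 + 16 * (∑ i ∈ Finset.Icc 1 t, (zbar Q δ' i) ^ 2) /
              (cPE * pPE * ((t : ℝ) - 1))) +
            Real.log (Real.pi ^ 2 * ((t : ℝ) - (T : ℝ) + 1) ^ 2 / (2 * δ))) + 1 ≤ (t : ℝ) := by
    intro t htT
    obtain ⟨h1, h2, h3⟩ := hT t htT
    have ht2 : (2:ℝ) ≤ (t:ℝ) := by exact_mod_cast h3
    have hTt : (T:ℝ) ≤ (t:ℝ) := by exact_mod_cast htT
    have hpi := Real.pi_pos
    have hBt : Real.log (Real.pi ^ 2 * ((t:ℝ) - (T:ℝ) + 1) ^ 2 / (2 * δ))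
        ≤ Real.log (Real.pi ^ 2 * ((t:ℝ) + 1) ^ 2 / (2 * δ)) := by
      apply Real.log_le_log
      · have hge : (0:ℝ) < (t:ℝ) - (T:ℝ) + 1 := by linarith
        exact div_pos (mul_pos (pow_pos hpi 2) (pow_pos hge 2)) (by linarith)
      · gcongr
        · linarith
    have hA' : (dd:ℝ) * Real.log (1 + 16 * (∑ i ∈ Finset.Icc 1 t, (zbar Q δ' i) ^ 2) /
        (cPE * pPE * ((t:ℝ) - 1))) ≤ (dd:ℝ) * (ε₀ * t) :=
      mul_le_mul_of_nonneg_left h1 (Nat.cast_nonneg dd)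
    have hB' : Real.log (Real.pi ^ 2 * ((t:ℝ) - (T:ℝ) + 1) ^ 2 / (2 * δ)) ≤ ε₀ * t :=
      le_trans hBt h2
    have hcomb : K * ((dd:ℝ) * (ε₀ * t) + ε₀ * t) = t / 2 := by
      have ha : K * ((dd:ℝ) + 1) ≠ 0 := ne_of_gt (mul_pos hKpos hdd1)
      calc K * ((dd:ℝ) * (ε₀ * t) + ε₀ * t) = K * ((dd:ℝ) + 1) * ε₀ * t := by ring
        _ = (t:ℝ) / 2 := by
            rw [hε₀, show (2:ℝ) * K * ((dd:ℝ) + 1) = K * ((dd:ℝ) + 1) * 2 from by ring,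
              mul_one_div, ← div_div, div_self ha]
            ring
    have hmul : K * ((dd:ℝ) * Real.log (1 + 16 * (∑ i ∈ Finset.Icc 1 t, (zbar Q δ' i) ^ 2) /
        (cPE * pPE * ((t:ℝ) - 1))) +
          Real.log (Real.pi ^ 2 * ((t:ℝ) - (T:ℝ) + 1) ^ 2 / (2 * δ)))
        ≤ K * ((dd:ℝ) * (ε₀ * t) + ε₀ * t) :=
      mul_le_mul_of_nonneg_left (by linarith) hKpos.le
    have hfin : K * ((dd:ℝ) * Real.log (1 + 16 * (∑ i ∈ Finset.Icc 1 t, (zbar Q δ' i) ^ 2) /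
        (cPE * pPE * ((t:ℝ) - 1))) +
          Real.log (Real.pi ^ 2 * ((t:ℝ) - (T:ℝ) + 1) ^ 2 / (2 * δ))) + 1 ≤ (t:ℝ) := by
      rw [hcomb] at hmul
      linarith
    exact hfin
  refine ⟨⟨T, main⟩, ?_⟩
  refine lt_of_le_of_lt (sInf_le ?_) (ENat.coe_lt_top T)
  exact ⟨T, rfl, main⟩
end
end

section
/- Let w̄, ū₁, ū₂ > 0, let W be a random variable uniformly distributed on [−w̄, w̄] and S a random variable uniformly distributed on [−ū₂, ū₂], with W and S independent. Let κ : ℝ → ℝ be any Borel measurable function with |κ(y)| ≤ ū₁ for all y. Then for every x ∈ ℝ and every unit vector (ζ₁,ζ₂) ∈ ℝ² (ζ₁²+ζ₂²=1), the random variable Y := |ζ₁(x+W) + ζ₂(κ(x+W)+S)| satisfies: (a) 𝔼[Y] ≥ min( w̄/4, w̄·ū₂/(8ū₁+4w̄) ); and (b) Var(Y) ≤ 3·max( w̄²/3, ū₂²/3 + 4ū₁² ). (This is the content of the regional-excitation verification for the piecewise-affine example, where κ(y) = sat_{ū₁}(−ϑ₂†ϑ₁y) for a parameter estimate ϑ.)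 -/
open MeasureTheory ProbabilityTheory Set

noncomputable section

/-- The uniform probability measure on the interval `[a,b]`. -/
noncomputable def uniformIcc (a b : ℝ) : Measure ℝ :=
  (ENNReal.ofReal (b - a))⁻¹ • volume.restrict (Set.Icc a b)


lemma hasDerivAt_mul_abs (u : ℝ) : HasDerivAt (fun v : ℝ => v * |v| / 2) |u| u := by
  rcases lt_trichotomy u 0 with h | h | h
  · have : ∀ᶠ v in nhds u, v * |v| / 2 = -(v^2)/2 := by
      filter_upwards [eventually_lt_nhds h] with v hv
      rw [abs_of_neg hv]; ring
    have h2 : HasDerivAt (fun v : ℝ => -(v^2)/2) |u| u := by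
      have h3 := ((hasDerivAt_pow 2 u).neg.div_const 2)
      rw [show |u| = -(↑2 * u ^ (2 - 1)) / 2 by rw [abs_of_neg h]; push_cast; ring]
      exact h3
    exact h2.congr_of_eventuallyEq this
  · subst h
    rw [hasDerivAt_iff_tendsto_slope]
    have heq : ∀ v : ℝ, v ≠ 0 → slope (fun v : ℝ => v * |v| / 2) 0 v = |v| / 2 := by
      intro v hv
      simp only [slope, vsub_eq_sub, smul_eq_mul, sub_zero, mul_zero, abs_zero, zero_mul, zero_div]
      field_simp
    have htend : Filter.Tendsto (fun v : ℝ => |v| / 2) (nhdsWithin 0 {(0:ℝ)}ᶜ) (nhds |(0:ℝ)|) := by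
      apply Filter.Tendsto.mono_left _ nhdsWithin_le_nhds
      simpa using ((continuous_abs.div_const 2).tendsto (0:ℝ))
    refine htend.congr' ?_
    filter_upwards [self_mem_nhdsWithin] with v hv
    exact (heq v hv).symm
  · have : ∀ᶠ v in nhds u, v * |v| / 2 = (v^2)/2 := by
      filter_upwards [eventually_gt_nhds h] with v hv
      rw [abs_of_pos hv]; ring
    have h2 : HasDerivAt (fun v : ℝ => (v^2)/2) |u| u := by
      have h3 := ((hasDerivAt_pow 2 u).div_const 2)
      rw [show |u| = ↑2 * u ^ (2 - 1) / 2 by rw [abs_of_pos h]; push_cast; ring]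
      exact h3
    exact h2.congr_of_eventuallyEq this

lemma integral_abs_eval (a b : ℝ) : ∫ u in a..b, |u| = (b * |b| - a * |a|) / 2 := by
  have := intervalIntegral.integral_eq_sub_of_hasDerivAt (f := fun v : ℝ => v * |v| / 2)
    (fun u _ => hasDerivAt_mul_abs u)
    ((continuous_abs.intervalIntegrable a b))
  rw [this]; ring




lemma uniformIcc_prob (hc : 0 < c) : IsProbabilityMeasure (uniformIcc (-c) c) := by
  constructor
  rw [uniformIcc, Measure.smul_apply, Measure.restrict_apply MeasurableSet.univ,
    Set.univ_inter, Real.volume_Icc, smul_eq_mul]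
  rw [ENNReal.inv_mul_cancel]
  · exact ne_of_gt (ENNReal.ofReal_pos.mpr (by linarith))
  · exact ENNReal.ofReal_ne_top

lemma uniformIcc_integral (hc : 0 < c) (g : ℝ → ℝ) :
    ∫ s, g s ∂(uniformIcc (-c) c) = (2 * c)⁻¹ * ∫ s in (-c)..c, g s := by
  rw [uniformIcc, MeasureTheory.integral_smul_measure, MeasureTheory.integral_Icc_eq_integral_Ioc,
    ← intervalIntegral.integral_of_le (by linarith : -c ≤ c)]
  rw [smul_eq_mul]
  congr 1
  rw [show c - -c = 2 * c from by ring, ENNReal.toReal_inv,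
    ENNReal.toReal_ofReal (by linarith)]

lemma uniformIcc_integrable (hc : 0 < c) {g : ℝ → ℝ} (hg : Measurable g) {B : ℝ}
    (hB : ∀ s, |g s| ≤ B) : Integrable g (uniformIcc (-c) c) := by
  rw [uniformIcc]
  have h1 : IntegrableOn g (Set.Icc (-c) c) volume := by
    refine Measure.integrableOn_of_bounded (M := B) ?_ hg.aestronglyMeasurable ?_
    · simp [Real.volume_Icc]
    · filter_upwards with s using (by simpa using hB s)
  refine h1.smul_measure ?_
  simp only [ne_eq, ENNReal.inv_eq_top]
  exact ne_of_gt (ENNReal.ofReal_pos.mpr (by linarith))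

lemma uniformIcc_mean (hc : 0 < c) : ∫ s, s ∂(uniformIcc (-c) c) = 0 := by
  rw [uniformIcc_integral hc, integral_id]
  ring

lemma uniformIcc_sq (hc : 0 < c) : ∫ s, s ^ 2 ∂(uniformIcc (-c) c) = c ^ 2 / 3 := by
  rw [uniformIcc_integral hc, integral_pow]
  field_simp
  ring

lemma uniformIcc_abs_shift (hc : 0 < c) (m : ℝ) :
    c / 2 ≤ ∫ s, |m + s| ∂(uniformIcc (-c) c) := by
  rw [uniformIcc_integral hc]
  have h1 : (∫ s in (-c)..c, |m + s|) = ∫ u in (-c + m)..(c + m), |u| := by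
    have := intervalIntegral.integral_comp_add_right (a := -c) (b := c) (fun u => |u|) m
    simpa [add_comm] using this
  rw [h1, integral_abs_eval]
  have h2 : c ^ 2 ≤ ((c + m) * |c + m| - (-c + m) * |(-c + m)|) / 2 := by
    rcases le_total 0 (c + m) with h1 | h1 <;> rcases le_total 0 (-c + m) with h2 | h2
    · rw [abs_of_nonneg h1, abs_of_nonneg h2]; nlinarith
    · rw [abs_of_nonneg h1, abs_of_nonpos h2]; nlinarith [sq_nonneg m]
    · rw [abs_of_nonpos h1, abs_of_nonneg h2]; nlinarith
    · rw [abs_of_nonpos h1, abs_of_nonpos h2]; nlinarith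
  calc c / 2 = (2 * c)⁻¹ * c ^ 2 := by field_simp
    _ ≤ _ := mul_le_mul_of_nonneg_left h2 (by positivity)

lemma uniformIcc_abs (hc : 0 < c) : ∫ s, |s| ∂(uniformIcc (-c) c) = c / 2 := by
  rw [uniformIcc_integral hc, integral_abs_eval, abs_of_nonneg hc.le, abs_of_nonpos (by linarith : -c ≤ 0)]
  field_simp; ring

lemma sign_intervalIntegrable (a b : ℝ) :
    IntervalIntegrable (fun s : ℝ => if 0 ≤ s then (1:ℝ) else -1) volume a b := by
  apply IntervalIntegrable.mono_fun' (g := fun _ => (1:ℝ)) intervalIntegrable_const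
  · exact (Measurable.ite (measurableSet_le measurable_const measurable_id) measurable_const
      measurable_const).aestronglyMeasurable
  · filter_upwards with s; split <;> simp

lemma uniformIcc_sign (hc : 0 < c) :
    ∫ s, (if 0 ≤ s then (1:ℝ) else -1) ∂(uniformIcc (-c) c) = 0 := by
  rw [uniformIcc_integral hc]
  have hsplit := intervalIntegral.integral_add_adjacent_intervals (a := -c) (b := 0) (c := c)
    (μ := volume) (f := fun s => if 0 ≤ s then (1:ℝ) else -1)
    (sign_intervalIntegrable _ _) (sign_intervalIntegrable _ _)
  rw [← hsplit]
  have h1 : (∫ s in (-c)..(0:ℝ), (if 0 ≤ s then (1:ℝ) else -1)) = ∫ s in (-c)..(0:ℝ), (-1:ℝ) := by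
    apply intervalIntegral.integral_congr_ae
    have h0 : ∀ᵐ (s : ℝ) ∂(volume : Measure ℝ), s ≠ 0 := by
      rw [MeasureTheory.ae_iff]
      simpa using Real.volume_singleton
    filter_upwards [h0] with s hs0 hmem
    have : s < 0 := by
      rcases Set.mem_Ioc.mp (by simpa [Set.uIoc_of_le (by linarith : (-c:ℝ) ≤ 0)] using hmem) with ⟨_, h2⟩
      exact lt_of_le_of_ne h2 hs0
    simp [not_le.mpr this]
  have h2 : (∫ s in (0:ℝ)..c, (if 0 ≤ s then (1:ℝ) else -1)) = ∫ s in (0:ℝ)..c, (1:ℝ) := by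
    apply intervalIntegral.integral_congr
    intro s hs
    rw [Set.uIcc_of_le (by linarith : (0:ℝ) ≤ c)] at hs
    simp [hs.1]
  rw [h1, h2]
  simp

lemma uniformIcc_ae (hc : 0 < c) : ∀ᵐ s ∂(uniformIcc (-c) c), |s| ≤ c := by
  have hnull : uniformIcc (-c) c (Icc (-c) c)ᶜ = 0 := by
    rw [uniformIcc, Measure.smul_apply, Measure.restrict_apply (measurableSet_Icc.compl)]
    rw [Set.compl_inter_self, measure_empty, smul_zero]
  refine MeasureTheory.ae_iff.mpr (measure_mono_null ?_ hnull)
  intro s hs hmem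
  exact hs (abs_le.mpr hmem)

lemma var_combine {A wb u1 u2 : ℝ} (h : A ≤ wb ^ 2 / 3 + u1 ^ 2 + u2 ^ 2 / 3) :
    A ≤ 3 * max (wb ^ 2 / 3) (u2 ^ 2 / 3 + 4 * u1 ^ 2) := by
  rcases le_total (wb ^ 2 / 3) (u2 ^ 2 / 3 + 4 * u1 ^ 2) with hm | hm
  · rw [max_eq_right hm]; nlinarith
  · rw [max_eq_left hm]; nlinarith



set_option maxHeartbeats 1000000 in
theorem pwa_example_regional_excitation_moments
    {Ω : Type*} [MeasurableSpace Ω] (Pm : Measure Ω) [IsProbabilityMeasure Pm]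
    (wb u1 u2 : ℝ) (hwb : 0 < wb) (hu1 : 0 < u1) (hu2 : 0 < u2)
    (W S : Ω → ℝ) (hWmeas : Measurable W) (hSmeas : Measurable S)
    (hWlaw : Measure.map W Pm = uniformIcc (-wb) wb)
    (hSlaw : Measure.map S Pm = uniformIcc (-u2) u2)
    (hindep : IndepFun W S Pm)
    (κ : ℝ → ℝ) (hκmeas : Measurable κ) (hκbdd : ∀ y, |κ y| ≤ u1) :
    ∀ x ζ₁ ζ₂ : ℝ, ζ₁ ^ 2 + ζ₂ ^ 2 = 1 →
      (min (wb / 4) (wb * u2 / (8 * u1 + 4 * wb)) ≤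
        ∫ ω, |ζ₁ * (x + W ω) + ζ₂ * (κ (x + W ω) + S ω)| ∂Pm) ∧
      ((∫ ω, (|ζ₁ * (x + W ω) + ζ₂ * (κ (x + W ω) + S ω)|
          - ∫ ω', |ζ₁ * (x + W ω') + ζ₂ * (κ (x + W ω') + S ω')| ∂Pm) ^ 2 ∂Pm) ≤
        3 * max (wb ^ 2 / 3) (u2 ^ 2 / 3 + 4 * u1 ^ 2)) := by
  intro x ζ₁ ζ₂ hζ
  have hζ1 : |ζ₁| ≤ 1 := abs_le.mpr ⟨by nlinarith [sq_nonneg ζ₂], by nlinarith [sq_nonneg ζ₂]⟩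
  have hζ2 : |ζ₂| ≤ 1 := abs_le.mpr ⟨by nlinarith [sq_nonneg ζ₁], by nlinarith [sq_nonneg ζ₁]⟩
  -- a.s. bounds on W and S
  have hWae : ∀ᵐ ω ∂Pm, |W ω| ≤ wb := by
    have h := uniformIcc_ae hwb
    rw [← hWlaw] at h
    exact ae_of_ae_map hWmeas.aemeasurable h
  have hSae : ∀ᵐ ω ∂Pm, |S ω| ≤ u2 := by
    have h := uniformIcc_ae hu2
    rw [← hSlaw] at h
    exact ae_of_ae_map hSmeas.aemeasurable h
  -- integrability helper
  have integ : ∀ (f : Ω → ℝ) (C : ℝ), Measurable f → (∀ᵐ ω ∂Pm, |f ω| ≤ C) →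
      Integrable f Pm := by
    intro f C hf hC
    refine (integrable_const C).mono' hf.aestronglyMeasurable ?_
    filter_upwards [hC] with ω h
    simpa [Real.norm_eq_abs] using h
  -- transfers
  have hWtr : ∀ (f : ℝ → ℝ), Measurable f →
      ∫ ω, f (W ω) ∂Pm = ∫ s, f s ∂(uniformIcc (-wb) wb) := by
    intro f hf
    rw [← hWlaw, MeasureTheory.integral_map hWmeas.aemeasurable hf.aestronglyMeasurable]
  have hStr : ∀ (f : ℝ → ℝ), Measurable f →
      ∫ ω, f (S ω) ∂Pm = ∫ s, f s ∂(uniformIcc (-u2) u2) := by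
    intro f hf
    rw [← hSlaw, MeasureTheory.integral_map hSmeas.aemeasurable hf.aestronglyMeasurable]
  -- the functions
  set g : ℝ → ℝ := fun w => ζ₁ * (x + w) + ζ₂ * κ (x + w) with hgdef
  have hgmeas : Measurable g :=
    ((measurable_const.mul (measurable_const.add measurable_id)).add
      (measurable_const.mul (hκmeas.comp (measurable_const.add measurable_id))))
  set σg : ℝ → ℝ := fun w => if 0 ≤ g w then 1 else -1 with hσgdef
  have hσgmeas : Measurable σg :=
    Measurable.ite (measurableSet_le measurable_const hgmeas) measurable_const measurable_const
  set σ : ℝ → ℝ := fun s => if 0 ≤ s then 1 else -1 with hσdef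
  have hσmeas : Measurable σ :=
    Measurable.ite (measurableSet_le measurable_const measurable_id) measurable_const
      measurable_const
  have hσg1 : ∀ w, |σg w| ≤ 1 := by intro w; rw [hσgdef]; dsimp only; split <;> simp
  have hσ1 : ∀ s, |σ s| ≤ 1 := by intro s; rw [hσdef]; dsimp only; split <;> simp
  -- bound on g
  set Cg : ℝ := |x| + wb + u1 with hCgdef
  have hgbd : ∀ w, |w| ≤ wb → |g w| ≤ Cg := by
    intro w hw
    rw [hgdef]
    dsimp only
    calc |ζ₁ * (x + w) + ζ₂ * κ (x + w)| ≤ |ζ₁ * (x + w)| + |ζ₂ * κ (x + w)| := abs_add_le _ _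
      _ = |ζ₁| * |x + w| + |ζ₂| * |κ (x + w)| := by rw [abs_mul, abs_mul]
      _ ≤ 1 * (|x| + wb) + 1 * u1 := by
          have h1 : |x + w| ≤ |x| + wb := (abs_add_le x w).trans (by linarith)
          have h2 := hκbdd (x + w)
          have h3 := abs_nonneg (x + w)
          have h4 := abs_nonneg (κ (x + w))
          have h5 := abs_nonneg ζ₁
          have h6 := abs_nonneg ζ₂
          nlinarith
      _ = Cg := by rw [hCgdef]; ring
  have hCg0 : 0 ≤ Cg := by rw [hCgdef]; positivity
  -- integrabilities
  have intS : Integrable S Pm := integ S u2 hSmeas hSae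
  have intabsS : Integrable (fun ω => |S ω|) Pm :=
    integ _ u2 hSmeas.abs (by filter_upwards [hSae] with ω h using by simpa using h)
  have intgW : Integrable (fun ω => g (W ω)) Pm :=
    integ _ Cg (hgmeas.comp hWmeas) (by filter_upwards [hWae] with ω h using hgbd _ h)
  have intZ : Integrable (fun ω => g (W ω) + ζ₂ * S ω) Pm := by
    refine intgW.add (intS.const_mul ζ₂)
  have intabsZ : Integrable (fun ω => |g (W ω) + ζ₂ * S ω|) Pm := intZ.abs
  -- basic integrals
  have ES : ∫ ω, S ω ∂Pm = 0 := by
    have h := hStr (fun s => s) measurable_id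
    rw [uniformIcc_mean hu2] at h
    exact h
  have EabsS : ∫ ω, |S ω| ∂Pm = u2 / 2 := by
    have h := hStr (fun s => |s|) measurable_abs
    rw [uniformIcc_abs hu2] at h
    exact h
  have EσS : ∫ ω, σ (S ω) ∂Pm = 0 := by
    have h := hStr σ hσmeas
    rw [hσdef, uniformIcc_sign hu2] at h
    exact h
  have EabsxW : wb / 2 ≤ ∫ ω, |x + W ω| ∂Pm := by
    have h := hWtr (fun s => |x + s|) (by fun_prop)
    rw [h]
    exact uniformIcc_abs_shift hwb x
  have EW2 : ∫ ω, (W ω) ^ 2 ∂Pm = wb ^ 2 / 3 := by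
    have h := hWtr (fun s => s ^ 2) (by fun_prop)
    rw [uniformIcc_sq hwb] at h
    exact h
  have ES2 : ∫ ω, (S ω) ^ 2 ∂Pm = u2 ^ 2 / 3 := by
    have h := hStr (fun s => s ^ 2) (by fun_prop)
    rw [uniformIcc_sq hu2] at h
    exact h
  -- rewrite the main integrand
  have hZ : ∀ ω, ζ₁ * (x + W ω) + ζ₂ * (κ (x + W ω) + S ω) = g (W ω) + ζ₂ * S ω := by
    intro ω; rw [hgdef]; ring
  have hI' : (∫ ω, |ζ₁ * (x + W ω) + ζ₂ * (κ (x + W ω) + S ω)| ∂Pm)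
      = ∫ ω, |g (W ω) + ζ₂ * S ω| ∂Pm := by
    congr 1
    funext ω
    rw [hZ ω]
  ---- PART 1 : expectation lower bound
  have hlow1 : |ζ₁| * wb / 2 - |ζ₂| * u1 ≤ ∫ ω, |g (W ω) + ζ₂ * S ω| ∂Pm := by
    -- step 1: sign trick with σg
    have intprod : Integrable (fun ω => |g (W ω)| + ζ₂ * (σg (W ω) * S ω)) Pm := by
      refine (intgW.abs).add (Integrable.const_mul ?_ ζ₂)
      refine integ _ u2 ((hσgmeas.comp hWmeas).mul hSmeas) ?_
      filter_upwards [hSae] with ω h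
      rw [abs_mul]
      have := hσg1 (W ω)
      nlinarith [abs_nonneg (S ω), abs_nonneg (σg (W ω))]
    have step1 : ∫ ω, (|g (W ω)| + ζ₂ * (σg (W ω) * S ω)) ∂Pm
        ≤ ∫ ω, |g (W ω) + ζ₂ * S ω| ∂Pm := by
      refine integral_mono intprod intabsZ ?_
      intro ω
      dsimp only
      have key : |g (W ω)| + ζ₂ * (σg (W ω) * S ω) = (g (W ω) + ζ₂ * S ω) * σg (W ω) := by
        rw [hσgdef]; dsimp only
        split_ifs with h
        · rw [abs_of_nonneg h]; ring
        · rw [abs_of_neg (not_le.mp h)]; ring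
      rw [key]
      calc (g (W ω) + ζ₂ * S ω) * σg (W ω) ≤ |(g (W ω) + ζ₂ * S ω) * σg (W ω)| := le_abs_self _
        _ = |g (W ω) + ζ₂ * S ω| * |σg (W ω)| := abs_mul _ _
        _ ≤ |g (W ω) + ζ₂ * S ω| * 1 := by
            exact mul_le_mul_of_nonneg_left (hσg1 _) (abs_nonneg _)
        _ = _ := mul_one _
    -- step 2: evaluate lhs
    have cross : ∫ ω, σg (W ω) * S ω ∂Pm = 0 := by
      have hind : IndepFun (fun ω => σg (W ω)) S Pm := hindep.comp hσgmeas measurable_id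
      have intσgW : Integrable (fun ω => σg (W ω)) Pm :=
        integ _ 1 (hσgmeas.comp hWmeas) (Filter.Eventually.of_forall fun ω => hσg1 _)
      have hfe : (fun ω => σg (W ω) * S ω) = (fun ω => σg (W ω)) * S := rfl
      rw [hfe, hind.integral_mul_eq_mul_integral intσgW.aestronglyMeasurable intS.aestronglyMeasurable, ES, mul_zero]
    have eval : ∫ ω, (|g (W ω)| + ζ₂ * (σg (W ω) * S ω)) ∂Pm = ∫ ω, |g (W ω)| ∂Pm := by
      rw [integral_add (intgW.abs) ?_, integral_const_mul, cross, mul_zero, add_zero]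
      refine Integrable.const_mul ?_ ζ₂
      refine integ _ u2 ((hσgmeas.comp hWmeas).mul hSmeas) ?_
      filter_upwards [hSae] with ω h
      rw [abs_mul]
      have := hσg1 (W ω)
      nlinarith [abs_nonneg (S ω), abs_nonneg (σg (W ω))]
    -- step 3: lower bound ∫ |g(W)|
    have ptw : ∀ w, |ζ₁| * |x + w| - |ζ₂| * u1 ≤ |g w| := by
      intro w
      have h1 : |ζ₁ * (x + w)| - |-(ζ₂ * κ (x + w))| ≤ |ζ₁ * (x + w) - -(ζ₂ * κ (x + w))| :=
        abs_sub_abs_le_abs_sub _ _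
      have h2 : ζ₁ * (x + w) - -(ζ₂ * κ (x + w)) = g w := by rw [hgdef]; ring
      rw [h2, abs_neg, abs_mul, abs_mul] at h1
      have h3 : |ζ₂| * |κ (x + w)| ≤ |ζ₂| * u1 :=
        mul_le_mul_of_nonneg_left (hκbdd _) (abs_nonneg _)
      linarith
    have intlhs : Integrable (fun ω => |ζ₁| * |x + W ω| - |ζ₂| * u1) Pm := by
      refine Integrable.sub ?_ (integrable_const _)
      refine Integrable.const_mul ?_ _
      refine integ _ (|x| + wb) (by fun_prop) ?_
      filter_upwards [hWae] with ω h
      calc |(|x + W ω|)| = |x + W ω| := abs_abs _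
        _ ≤ |x| + |W ω| := abs_add_le _ _
        _ ≤ |x| + wb := by linarith
    have intabsxW : Integrable (fun ω => |x + W ω|) Pm := by
      refine integ _ (|x| + wb) (by fun_prop) ?_
      filter_upwards [hWae] with ω h
      calc |(|x + W ω|)| = |x + W ω| := abs_abs _
        _ ≤ |x| + |W ω| := abs_add_le _ _
        _ ≤ |x| + wb := by linarith
    have step3 : |ζ₁| * wb / 2 - |ζ₂| * u1 ≤ ∫ ω, |g (W ω)| ∂Pm := by
      have h := integral_mono intlhs intgW.abs (fun ω => ptw (W ω))
      rw [integral_sub (intabsxW.const_mul _) (integrable_const _), integral_const_mul,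
        integral_const, probReal_univ, smul_eq_mul, one_mul] at h
      have h2 : |ζ₁| * (wb / 2) ≤ |ζ₁| * ∫ ω, |x + W ω| ∂Pm :=
        mul_le_mul_of_nonneg_left EabsxW (abs_nonneg _)
      linarith
    rw [eval] at step1
    linarith
  ---- PART 1b : second lower bound
  have hlow2 : |ζ₂| * u2 / 2 ≤ ∫ ω, |g (W ω) + ζ₂ * S ω| ∂Pm := by
    set sζ : ℝ := if 0 ≤ ζ₂ then 1 else -1 with hsζdef
    have hsζ : sζ * ζ₂ = |ζ₂| := by
      rw [hsζdef]; split_ifs with h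
      · rw [abs_of_nonneg h]; ring
      · rw [abs_of_neg (not_le.mp h)]; ring
    have hsζ1 : |sζ| ≤ 1 := by rw [hsζdef]; split <;> simp
    have intσS : Integrable (fun ω => σ (S ω)) Pm :=
      integ _ 1 (hσmeas.comp hSmeas) (Filter.Eventually.of_forall fun ω => hσ1 _)
    have intlhs : Integrable (fun ω => sζ * (g (W ω) * σ (S ω)) + |ζ₂| * |S ω|) Pm := by
      refine Integrable.add (Integrable.const_mul ?_ _) (intabsS.const_mul _)
      refine integ _ Cg ((hgmeas.comp hWmeas).mul (hσmeas.comp hSmeas)) ?_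
      filter_upwards [hWae] with ω h
      rw [abs_mul]
      have h1 := hgbd _ h
      have h2 := hσ1 (S ω)
      nlinarith [abs_nonneg (g (W ω)), abs_nonneg (σ (S ω))]
    have step1 : ∫ ω, (sζ * (g (W ω) * σ (S ω)) + |ζ₂| * |S ω|) ∂Pm
        ≤ ∫ ω, |g (W ω) + ζ₂ * S ω| ∂Pm := by
      refine integral_mono intlhs intabsZ ?_
      intro ω
      dsimp only
      have key : sζ * (g (W ω) * σ (S ω)) + |ζ₂| * |S ω|
          = (g (W ω) + ζ₂ * S ω) * (sζ * σ (S ω)) := by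
        have hSabs : S ω * σ (S ω) = |S ω| := by
          rw [hσdef]; dsimp only
          split_ifs with h
          · rw [abs_of_nonneg h]; ring
          · rw [abs_of_neg (not_le.mp h)]; ring
        have : (g (W ω) + ζ₂ * S ω) * (sζ * σ (S ω))
            = sζ * (g (W ω) * σ (S ω)) + (sζ * ζ₂) * (S ω * σ (S ω)) := by ring
        rw [this, hSabs, hsζ]
      rw [key]
      calc (g (W ω) + ζ₂ * S ω) * (sζ * σ (S ω))
          ≤ |(g (W ω) + ζ₂ * S ω) * (sζ * σ (S ω))| := le_abs_self _
        _ = |g (W ω) + ζ₂ * S ω| * (|sζ| * |σ (S ω)|) := by rw [abs_mul, abs_mul]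
        _ ≤ |g (W ω) + ζ₂ * S ω| * (1 * 1) := by
            refine mul_le_mul_of_nonneg_left ?_ (abs_nonneg _)
            exact mul_le_mul hsζ1 (hσ1 _) (abs_nonneg _) zero_le_one
        _ = _ := by rw [mul_one, mul_one]
    have cross : ∫ ω, g (W ω) * σ (S ω) ∂Pm = 0 := by
      have hind : IndepFun (fun ω => g (W ω)) (fun ω => σ (S ω)) Pm :=
        hindep.comp hgmeas hσmeas
      have intσS' : Integrable (fun ω => σ (S ω)) Pm := intσS
      have hfe : (fun ω => g (W ω) * σ (S ω)) = (fun ω => g (W ω)) * (fun ω => σ (S ω)) := rfl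
      rw [hfe, hind.integral_mul_eq_mul_integral intgW.aestronglyMeasurable intσS'.aestronglyMeasurable, EσS, mul_zero]
    have intprod2 : Integrable (fun ω => g (W ω) * σ (S ω)) Pm := by
      refine integ _ Cg ((hgmeas.comp hWmeas).mul (hσmeas.comp hSmeas)) ?_
      filter_upwards [hWae] with ω h
      rw [abs_mul]
      have h1 := hgbd _ h
      have h2 := hσ1 (S ω)
      nlinarith [abs_nonneg (g (W ω)), abs_nonneg (σ (S ω))]
    have eval : ∫ ω, (sζ * (g (W ω) * σ (S ω)) + |ζ₂| * |S ω|) ∂Pm = |ζ₂| * (u2 / 2) := by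
      rw [integral_add (intprod2.const_mul _) (intabsS.const_mul _),
        integral_const_mul, integral_const_mul, cross, mul_zero, zero_add, EabsS]
    rw [eval] at step1
    linarith
  ---- PART 1 conclusion
  constructor
  · rw [hI']
    set a : ℝ := |ζ₁| with hadef
    set b : ℝ := |ζ₂| with hbdef
    have ha0 : 0 ≤ a := abs_nonneg _
    have hb0 : 0 ≤ b := abs_nonneg _
    have hab : a ^ 2 + b ^ 2 = 1 := by rw [hadef, hbdef, sq_abs, sq_abs]; exact hζ
    have hb1 : b ≤ 1 := hζ2
    have hage : 1 - b ≤ a := by nlinarith [hab, mul_nonneg ha0 hb0, sq_nonneg (a + b - 1), sq_nonneg (a - b + 1)]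
    rcases le_total (wb / (4 * u1 + 2 * wb)) b with hcase | hcase
    · refine le_trans (min_le_right _ _) (le_trans ?_ hlow2)
      rw [div_le_iff₀ (by positivity)] at hcase
      rw [div_le_iff₀ (by positivity)]
      nlinarith [mul_le_mul_of_nonneg_right hcase hu2.le]
    · refine le_trans (min_le_left _ _) (le_trans ?_ hlow1)
      rw [le_div_iff₀ (by positivity)] at hcase
      have hprod : (1 - b) * wb ≤ a * wb := mul_le_mul_of_nonneg_right hage hwb.le
      linarith
  ---- PART 2 : variance upper bound
  · -- variance bound
    set Y : Ω → ℝ := fun ω => |g (W ω) + ζ₂ * S ω| with hYdef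
    have hYmeas : Measurable Y :=
      ((hgmeas.comp hWmeas).add (hSmeas.const_mul ζ₂)).abs
    set CY : ℝ := Cg + u2 with hCYdef
    have hYae : ∀ᵐ ω ∂Pm, |Y ω| ≤ CY := by
      filter_upwards [hWae, hSae] with ω h1 h2
      rw [hYdef, hCYdef]
      dsimp only
      rw [abs_abs]
      calc |g (W ω) + ζ₂ * S ω| ≤ |g (W ω)| + |ζ₂ * S ω| := abs_add_le _ _
        _ ≤ Cg + u2 := by
            have h3 := hgbd _ h1
            rw [abs_mul]
            have h4 := abs_nonneg (S ω)
            nlinarith [abs_nonneg ζ₂]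
    have intY : Integrable Y Pm := integ Y CY hYmeas hYae
    set EY : ℝ := ∫ ω, Y ω ∂Pm with hEYdef
    set c₀ : ℝ := |ζ₁ * x| with hc₀def
    have hc₀0 : 0 ≤ c₀ := abs_nonneg _
    set V : Ω → ℝ := fun ω => ζ₁ * W ω + ζ₂ * κ (x + W ω) with hVdef
    have hVmeas : Measurable V :=
      (hWmeas.const_mul ζ₁).add ((hκmeas.comp (measurable_const.add hWmeas)).const_mul ζ₂)
    set CV : ℝ := wb + u1 with hCVdef
    have hVae : ∀ᵐ ω ∂Pm, |V ω| ≤ CV := by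
      filter_upwards [hWae] with ω h1
      rw [hVdef, hCVdef]
      dsimp only
      calc |ζ₁ * W ω + ζ₂ * κ (x + W ω)| ≤ |ζ₁ * W ω| + |ζ₂ * κ (x + W ω)| := abs_add_le _ _
        _ ≤ wb + u1 := by
            rw [abs_mul, abs_mul]
            have h2 := hκbdd (x + W ω)
            nlinarith [abs_nonneg (W ω), abs_nonneg (κ (x + W ω)), abs_nonneg ζ₁, abs_nonneg ζ₂]
    have intV : Integrable V Pm := integ V CV hVmeas hVae
    -- goal rewriting
    have hgoal : (∫ ω, (|ζ₁ * (x + W ω) + ζ₂ * (κ (x + W ω) + S ω)|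
        - ∫ ω', |ζ₁ * (x + W ω') + ζ₂ * (κ (x + W ω') + S ω')| ∂Pm) ^ 2 ∂Pm)
        = ∫ ω, (Y ω - EY) ^ 2 ∂Pm := by
      rw [hI']
      congr 1
      funext ω
      rw [hZ ω]
    rw [hgoal]
    -- integrability facts
    have intY1 : Integrable (fun ω => Y ω - c₀) Pm := intY.sub (integrable_const _)
    have intY2 : Integrable (fun ω => (Y ω - c₀) ^ 2) Pm := by
      refine integ _ ((CY + c₀) ^ 2) ((hYmeas.sub measurable_const).pow_const 2) ?_
      filter_upwards [hYae] with ω h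
      rw [abs_of_nonneg (sq_nonneg _)]
      obtain ⟨ha, hb⟩ := abs_le.mp h
      exact sq_le_sq' (by linarith) (by linarith)
    -- Step A : recentering
    have stepA : ∫ ω, (Y ω - EY) ^ 2 ∂Pm ≤ ∫ ω, (Y ω - c₀) ^ 2 ∂Pm := by
      have hid : (fun ω => (Y ω - EY) ^ 2)
          = fun ω => ((Y ω - c₀) ^ 2 - (2 * (EY - c₀)) * (Y ω - c₀)) + (EY - c₀) ^ 2 := by
        funext ω; ring
      have intf : Integrable (fun ω => (Y ω - c₀) ^ 2 - (2 * (EY - c₀)) * (Y ω - c₀)) Pm := by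
        exact intY2.sub (intY1.const_mul _)
      have intg : Integrable (fun ω => (2 * (EY - c₀)) * (Y ω - c₀)) Pm := by
        exact intY1.const_mul _
      rw [hid, integral_add intf (integrable_const _),
        integral_sub intY2 intg, integral_const_mul,
        integral_sub intY (integrable_const _), integral_const, integral_const,
        probReal_univ, one_smul, one_smul, ← hEYdef]
      nlinarith [sq_nonneg (EY - c₀)]
    -- Step B : compare with (V + ζ₂ S)²
    have intVZ2 : Integrable (fun ω => (V ω + ζ₂ * S ω) ^ 2) Pm := by
      refine integ _ ((CV + u2) ^ 2)
        ((hVmeas.add (hSmeas.const_mul ζ₂)).pow_const 2) ?_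
      filter_upwards [hVae, hSae] with ω h1 h2
      rw [abs_of_nonneg (sq_nonneg _)]
      have h3 : |V ω + ζ₂ * S ω| ≤ CV + u2 := by
        calc |V ω + ζ₂ * S ω| ≤ |V ω| + |ζ₂ * S ω| := abs_add_le _ _
          _ ≤ CV + u2 := by
              rw [abs_mul]
              have h5 : |ζ₂| * |S ω| ≤ 1 * u2 := mul_le_mul hζ2 h2 (abs_nonneg _) zero_le_one
              linarith
      obtain ⟨ha, hb⟩ := abs_le.mp h3
      exact sq_le_sq' (by linarith) (by linarith)
    have stepB : ∫ ω, (Y ω - c₀) ^ 2 ∂Pm ≤ ∫ ω, (V ω + ζ₂ * S ω) ^ 2 ∂Pm := by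
      refine integral_mono intY2 intVZ2 ?_
      intro ω
      dsimp only
      have h1 : |Y ω - c₀| ≤ |(g (W ω) + ζ₂ * S ω) - ζ₁ * x| := by
        rw [hYdef, hc₀def]
        exact abs_abs_sub_abs_le_abs_sub _ _
      have h2 : (g (W ω) + ζ₂ * S ω) - ζ₁ * x = V ω + ζ₂ * S ω := by
        rw [hgdef, hVdef]; dsimp only; ring
      rw [h2] at h1
      calc (Y ω - c₀) ^ 2 = |Y ω - c₀| ^ 2 := (sq_abs _).symm
        _ ≤ |V ω + ζ₂ * S ω| ^ 2 := by
            exact pow_le_pow_left₀ (abs_nonneg _) h1 2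
        _ = (V ω + ζ₂ * S ω) ^ 2 := sq_abs _
    -- Step C : expand the square
    have intV2 : Integrable (fun ω => V ω ^ 2) Pm := by
      refine integ _ (CV ^ 2) (hVmeas.pow_const 2) ?_
      filter_upwards [hVae] with ω h
      rw [abs_of_nonneg (sq_nonneg _)]
      obtain ⟨ha, hb⟩ := abs_le.mp h
      exact sq_le_sq' (by linarith) (by linarith)
    have hCV0 : 0 ≤ CV := by rw [hCVdef]; positivity
    have intVS : Integrable (fun ω => V ω * S ω) Pm := by
      refine integ _ (CV * u2) (hVmeas.mul hSmeas) ?_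
      filter_upwards [hVae, hSae] with ω h1 h2
      rw [abs_mul]
      exact mul_le_mul h1 h2 (abs_nonneg _) hCV0
    have intS2 : Integrable (fun ω => S ω ^ 2) Pm := by
      refine integ _ (u2 ^ 2) (hSmeas.pow_const 2) ?_
      filter_upwards [hSae] with ω h
      rw [abs_of_nonneg (sq_nonneg _)]
      obtain ⟨ha, hb⟩ := abs_le.mp h
      exact sq_le_sq' (by linarith) (by linarith)
    have crossV : ∫ ω, V ω * S ω ∂Pm = 0 := by
      have hind : IndepFun V S Pm := by
        have := hindep.comp (φ := fun w => ζ₁ * w + ζ₂ * κ (x + w)) (ψ := id)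
          ((measurable_id.const_mul ζ₁).add ((hκmeas.comp (measurable_const.add measurable_id)).const_mul ζ₂))
          measurable_id
        exact this
      have hfe : (fun ω => V ω * S ω) = V * S := rfl
      rw [hfe, hind.integral_mul_eq_mul_integral intV.aestronglyMeasurable intS.aestronglyMeasurable, ES, mul_zero]
    have stepC : ∫ ω, (V ω + ζ₂ * S ω) ^ 2 ∂Pm
        = (∫ ω, V ω ^ 2 ∂Pm) + ζ₂ ^ 2 * (u2 ^ 2 / 3) := by
      have hid : (fun ω => (V ω + ζ₂ * S ω) ^ 2)
          = fun ω => (V ω ^ 2 + (2 * ζ₂) * (V ω * S ω)) + ζ₂ ^ 2 * S ω ^ 2 := by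
        funext ω; ring
      have intf : Integrable (fun ω => V ω ^ 2 + (2 * ζ₂) * (V ω * S ω)) Pm := by
        exact intV2.add (intVS.const_mul _)
      have intg : Integrable (fun ω => (2 * ζ₂) * (V ω * S ω)) Pm := by
        exact intVS.const_mul _
      have inth : Integrable (fun ω => ζ₂ ^ 2 * S ω ^ 2) Pm := by
        exact intS2.const_mul _
      rw [hid, integral_add intf inth,
        integral_add intV2 intg, integral_const_mul, integral_const_mul,
        crossV, mul_zero, add_zero, ES2]
    -- Step E : bound ∫ V²
    have intW2 : Integrable (fun ω => W ω ^ 2) Pm := by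
      refine integ _ (wb ^ 2) (hWmeas.pow_const 2) ?_
      filter_upwards [hWae] with ω h
      rw [abs_of_nonneg (sq_nonneg _)]
      obtain ⟨ha, hb⟩ := abs_le.mp h
      exact sq_le_sq' (by linarith) (by linarith)
    have stepE : ∫ ω, V ω ^ 2 ∂Pm ≤ wb ^ 2 / 3 + u1 ^ 2 := by
      have hmono : ∫ ω, V ω ^ 2 ∂Pm ≤ ∫ ω, (W ω ^ 2 + u1 ^ 2) ∂Pm := by
        have intg : Integrable (fun ω => W ω ^ 2 + u1 ^ 2) Pm := by
          exact intW2.add (integrable_const _)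
        refine integral_mono intV2 intg ?_
        intro ω
        dsimp only
        rw [hVdef]
        dsimp only
        have h1 := hκbdd (x + W ω)
        have h2 : κ (x + W ω) ^ 2 ≤ u1 ^ 2 := by
          obtain ⟨ha, hb⟩ := abs_le.mp h1
          exact sq_le_sq' (by linarith) (by linarith)
        nlinarith [sq_nonneg (ζ₁ * κ (x + W ω) - ζ₂ * W ω), sq_nonneg (W ω), hζ]
      have intg : Integrable (fun _ : Ω => u1 ^ 2) Pm := integrable_const _
      rw [integral_add intW2 intg, EW2, integral_const, probReal_univ,
        one_smul] at hmono
      exact hmono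
    -- combine
    have hζ2sq : ζ₂ ^ 2 ≤ 1 := by nlinarith [sq_nonneg ζ₁]
    have htotal : ∫ ω, (Y ω - EY) ^ 2 ∂Pm ≤ wb ^ 2 / 3 + u1 ^ 2 + u2 ^ 2 / 3 := by
      have h1 : ζ₂ ^ 2 * (u2 ^ 2 / 3) ≤ u2 ^ 2 / 3 := by nlinarith [sq_nonneg u2, sq_nonneg ζ₂]
      calc ∫ ω, (Y ω - EY) ^ 2 ∂Pm ≤ ∫ ω, (V ω + ζ₂ * S ω) ^ 2 ∂Pm := stepA.trans stepB
        _ = (∫ ω, V ω ^ 2 ∂Pm) + ζ₂ ^ 2 * (u2 ^ 2 / 3) := stepC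
        _ ≤ wb ^ 2 / 3 + u1 ^ 2 + u2 ^ 2 / 3 := by linarith
    exact var_combine htotal

end
end

section
/- Let x̄, w̄, ū₁, s̄ > 0, set u_max := ū₁ + s̄, and assume x̄ ≥ w̄ + 0.1(u_max + ū₁). Let κ̂ : ℝ → ℝ be a function with |κ̂(y)| ≤ ū₁ for all y, and let e₀ ≥ 0 satisfy |κ̂(y) − sat_{ū₁}(−10y)| ≤ e₀ for all y ∈ ℝ and 0.1ū₁ ≥ 0.1(e₀ + s̄) + w̄. Then for every x ∈ ℝ with |x| ≤ x̄ − w̄ − 0.1u_max, every s with |s| ≤ s̄, and every w with |w| ≤ w̄, one has | x + 0.1·𝟙_{[−x̄,x̄]}(x)·(κ̂(x) + s) + w | ≤ x̄ − w̄ − 0.1u_max. (This verifies robust positive invariance of the interval [−(x̄−w̄−0.1u_max), x̄−w̄−0.1u_max] for the piecewise-affine example system x⁺ = x + 0.1·𝟙_{|x|≤x̄}·u + w.) -/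
/-!
With the exact saturated feedback the closed loop `x + a * sat_r (-(x / a))` moves `x` by exactly
`a * r` towards the origin, stopping at `0`, so its modulus is `max (|x| - a r) 0`. The controller
error, the input disturbance and the additive disturbance add at most `a (e₀ + s̄) + w̄ ≤ a r`, hence
one step maps `|x|` to at most `max |x| (a r)`, and `a r = 0.1 ū₁` fits inside the invariant interval.
-/

noncomputable section

/-- Scalar saturation function. -/
noncomputable def satR (r v : ℝ) : ℝ := if |v| ≤ r then v else r * Real.sign v

theorem abs_add_mul_satR_neg_mul {a b r : ℝ} (ha : 0 < a) (hab : a * b = 1) (hr : 0 ≤ r)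
    (x : ℝ) : |x + a * satR r (-(b * x))| = max (|x| - a * r) 0 := by
  have hb : 0 < b := pos_of_mul_pos_right (hab ▸ one_pos) ha.le
  have hx : x = a * (b * x) := by rw [← mul_assoc, hab, one_mul]
  unfold satR
  split_ifs with hsat
  · rw [abs_neg, abs_mul, abs_of_pos hb] at hsat
    have : |x| ≤ a * r := by
      rw [hx, abs_mul, abs_mul, abs_of_pos ha, abs_of_pos hb]; gcongr
    rw [mul_neg, ← hx, add_neg_cancel, abs_zero, max_eq_right (by linarith)]
  · rw [abs_neg, abs_mul, abs_of_pos hb, not_le] at hsat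
    rcases lt_trichotomy x 0 with hneg | rfl | hpos
    · rw [Real.sign_of_pos (by nlinarith), abs_of_neg hneg] at *
      rw [abs_of_nonpos (by nlinarith), max_eq_left (by nlinarith)]
      ring
    · rw [abs_zero, mul_zero] at hsat; linarith
    · rw [Real.sign_of_neg (by nlinarith), abs_of_pos hpos] at *
      rw [abs_of_nonneg (by nlinarith), max_eq_left (by nlinarith)]
      ring

theorem abs_add_mul_add_add_le_max {a b r k e s sb w wb x : ℝ} (ha : 0 < a) (hab : a * b = 1)
    (hr : 0 ≤ r) (hk : |k - satR r (-(b * x))| ≤ e) (hs : |s| ≤ sb) (hw : |w| ≤ wb)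
    (hmargin : a * (e + sb) + wb ≤ a * r) :
    |x + a * (k + s) + w| ≤ max |x| (a * r) := by
  have hnom := abs_add_mul_satR_neg_mul ha hab hr x
  calc |x + a * (k + s) + w|
      = |(x + a * satR r (-(b * x))) + a * (k - satR r (-(b * x))) + a * s + w| := by congr 1; ring
    _ ≤ |x + a * satR r (-(b * x))| + |a * (k - satR r (-(b * x)))| + |a * s| + |w| := by
        grw [abs_add_le, abs_add_three]
    _ = |x + a * satR r (-(b * x))| + a * |k - satR r (-(b * x))| + a * |s| + |w| := by
        rw [abs_mul, abs_mul, abs_of_pos ha]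
    _ ≤ max (|x| - a * r) 0 + a * e + a * sb + wb := by rw [hnom]; gcongr
    _ ≤ max |x| (a * r) := by
        rcases le_total (|x| - a * r) 0 with h | h
        · rw [max_eq_right h]; linarith [le_max_right |x| (a * r)]
        · rw [max_eq_left h]; linarith [le_max_left |x| (a * r)]

theorem pwa_example_robust_positive_invariance_general
    (xb wb u1 sb : ℝ) (hwb : 0 < wb) (hu1 : 0 < u1) (hsb : 0 < sb)
    (umax : ℝ) (humax : umax = u1 + sb)
    (hgrow : wb + 0.1 * (umax + u1) ≤ xb)
    (κ : ℝ → ℝ)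
    (e0 : ℝ)
    (hκe : ∀ y : ℝ, |κ y - satR u1 (-(10 * y))| ≤ e0)
    (hmargin : 0.1 * (e0 + sb) + wb ≤ 0.1 * u1) :
    ∀ x s w : ℝ, |x| ≤ xb - wb - 0.1 * umax → |s| ≤ sb → |w| ≤ wb →
      |x + 0.1 * (if |x| ≤ xb then (1 : ℝ) else 0) * (κ x + s) + w| ≤
        xb - wb - 0.1 * umax := by
  intro x s w hx hs hw
  have hx_active : |x| ≤ xb := hx.trans (by rw [humax]; linarith)
  have hu1_le : 0.1 * u1 ≤ xb - wb - 0.1 * umax := by linarith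
  rw [if_pos hx_active, mul_one]
  exact (abs_add_mul_add_add_le_max (by norm_num) (by norm_num) hu1.le (hκe x) hs hw hmargin).trans
    (max_le hx hu1_le)

theorem pwa_example_robust_positive_invariance
    (xb wb u1 sb : ℝ) (hxb : 0 < xb) (hwb : 0 < wb) (hu1 : 0 < u1) (hsb : 0 < sb)
    (umax : ℝ) (humax : umax = u1 + sb)
    (hgrow : wb + 0.1 * (umax + u1) ≤ xb)
    (κ : ℝ → ℝ) (hκbdd : ∀ y, |κ y| ≤ u1)
    (e0 : ℝ) (he0 : 0 ≤ e0)
    (hκe : ∀ y : ℝ, |κ y - satR u1 (-(10 * y))| ≤ e0)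
    (hmargin : 0.1 * (e0 + sb) + wb ≤ 0.1 * u1) :
    ∀ x s w : ℝ, |x| ≤ xb - wb - 0.1 * umax → |s| ≤ sb → |w| ≤ wb →
      |x + 0.1 * (if |x| ≤ xb then (1 : ℝ) else 0) * (κ x + s) + w| ≤
        xb - wb - 0.1 * umax :=
  pwa_example_robust_positive_invariance_general xb wb u1 sb hwb hu1 hsb umax humax hgrow κ e0 hκe
    hmargin

end
end
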